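/- arXiv:2408.16525 — 7 statements merged into one kernel-verified Lean document; each statement's English description precedes it below -/
import Mathlib

section
/- Let κ < 0 and N > 1 be real, let (a,b) be a nonempty bounded open real interval, and let h be an MCP(κ,N) density on (a,b) which is positive at every point of (a,b). Set c := √(−κ/(N−1)). Then: (i) for all x, y with a < x < y < b one has (sinh(c·(b−y))/sinh(c·(b−x)))^{N−1} ≤ h(y)/h(x) ≤ (sinh(c·(y−a))/sinh(c·(x−a)))^{N−1}; and (ii) for every x ∈ (a,b) at which h is differentiable with derivative h'(x), one has −√(−κ·(N−1))·cosh(c·(b−x))/sinh(c·(b−x)) ≤ h'(x)/h(x) ≤ √(−κ·(N−1))·cosh(c·(x−a))/sinh(c·(x−a)). -/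
open Set

/-- An `MCP(κ,N)` density on the set `I ⊆ ℝ`, for a constant negative curvature
parameter `κ`, with the explicit hyperbolic distortion coefficients. -/
def IsMCPNegDensity (κ N : ℝ) (I : Set ℝ) (h : ℝ → ℝ) : Prop :=
  (∀ x ∈ I, 0 ≤ h x) ∧
    ∀ x₀ ∈ I, ∀ x₁ ∈ I, x₀ ≠ x₁ → ∀ t ∈ Set.Icc (0 : ℝ) 1,
      Real.sinh (Real.sqrt (-κ / (N - 1)) * ((1 - t) * |x₁ - x₀|)) /
          Real.sinh (Real.sqrt (-κ / (N - 1)) * |x₁ - x₀|) * h x₀ ^ (1 / (N - 1)) ≤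
        h ((1 - t) * x₀ + t * x₁) ^ (1 / (N - 1))

/-!
Write `c = √(-κ/(N-1))`. For `a < s < x < y < b`, the MCP inequality on the segment from `y` to
`s` gives `sinh (c (x - s)) h(y)^{1/(N-1)} ≤ sinh (c (y - s)) h(x)^{1/(N-1)}`; letting `s ↓ a`
shows that `log h - (N-1) log sinh (c (· - a))` is antitone on `(a,b)`. Both upper bounds follow,
the one on `h'/h` because an antitone function has nonpositive derivative. The lower bounds are
the upper bounds for the reflected density `x ↦ h (-x)` on `(-b,-a)`.
-/

open Real Pointwise

lemma sinh_sqrt_neg_div_mul_pos {κ N u : ℝ} (hκ : κ < 0) (hN : 1 < N) (hu : 0 < u) :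
    0 < sinh (√(-κ / (N - 1)) * u) :=
  sinh_pos_iff.mpr (mul_pos (sqrt_pos.mpr (div_pos (neg_pos.mpr hκ) (sub_pos.mpr hN))) hu)

lemma sqrt_neg_mul_eq {κ N : ℝ} (hN : 1 < N) :
    √(-κ * (N - 1)) = (N - 1) * √(-κ / (N - 1)) := by
  have hN1 : 0 < N - 1 := sub_pos.mpr hN
  rw [show -κ * (N - 1) = (N - 1) ^ 2 * (-κ / (N - 1)) by field_simp,
    sqrt_mul (sq_nonneg _), sqrt_sq hN1.le]

namespace IsMCPNegDensity

variable {κ N a b : ℝ} {I : Set ℝ} {h : ℝ → ℝ}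

theorem comp_neg (hh : IsMCPNegDensity κ N I h) :
    IsMCPNegDensity κ N (-I) (fun x ↦ h (-x)) := by
  refine ⟨fun x hx ↦ hh.1 _ (mem_neg.mp hx), fun x₀ hx₀ x₁ hx₁ hne t ht ↦ ?_⟩
  have := hh.2 (-x₀) (mem_neg.mp hx₀) (-x₁) (mem_neg.mp hx₁) (neg_injective.ne hne) t ht
  rwa [show -x₁ - -x₀ = -(x₁ - x₀) by ring, abs_neg,
    show (1 - t) * -x₀ + t * -x₁ = -((1 - t) * x₀ + t * x₁) by ring] at this

theorem sinh_div_mul_rpow_le (hh : IsMCPNegDensity κ N I h) {s x y : ℝ} (hs : s ∈ I)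
    (hy : y ∈ I) (hsx : s < x) (hxy : x < y) :
    sinh (√(-κ / (N - 1)) * (x - s)) / sinh (√(-κ / (N - 1)) * (y - s)) *
      h y ^ (1 / (N - 1)) ≤ h x ^ (1 / (N - 1)) := by
  have hys : 0 < y - s := by linarith
  have ht : (y - x) / (y - s) ∈ Icc (0 : ℝ) 1 :=
    ⟨div_nonneg (by linarith) hys.le, (div_le_one hys).mpr (by linarith)⟩
  have := hh.2 y hy s hs (by linarith) _ ht
  rwa [abs_sub_comm, abs_of_pos hys,
    show (1 - (y - x) / (y - s)) * (y - s) = x - s by field_simp; ring,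
    show (1 - (y - x) / (y - s)) * y + (y - x) / (y - s) * s = x by field_simp; ring] at this

theorem sinh_div_mul_rpow_le_of_left_endpoint (hκ : κ < 0) (hN : 1 < N)
    (hh : IsMCPNegDensity κ N (Ioo a b) h) {x y : ℝ} (hax : a < x) (hxy : x < y) (hyb : y < b) :
    sinh (√(-κ / (N - 1)) * (x - a)) / sinh (√(-κ / (N - 1)) * (y - a)) *
      h y ^ (1 / (N - 1)) ≤ h x ^ (1 / (N - 1)) := by
  set c := √(-κ / (N - 1))
  have hden : sinh (c * (y - a)) ≠ 0 :=
    (sinh_sqrt_neg_div_mul_pos hκ hN (by linarith)).ne'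
  have hcont : ContinuousAt
      (fun s ↦ sinh (c * (x - s)) / sinh (c * (y - s)) * h y ^ (1 / (N - 1))) a :=
    ((by fun_prop : ContinuousAt (fun s ↦ sinh (c * (x - s))) a).div (by fun_prop) hden).mul
      continuousAt_const
  refine le_of_tendsto (hcont.tendsto.mono_left (nhdsWithin_le_nhds (s := Ioi a))) ?_
  filter_upwards [Ioo_mem_nhdsGT hax] with s hs
  exact hh.sinh_div_mul_rpow_le ⟨hs.1, hs.2.trans (hxy.trans hyb)⟩
    ⟨hs.1.trans (hs.2.trans hxy), hyb⟩ hs.2 hxy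

theorem antitoneOn_log_sub_log_sinh (hκ : κ < 0) (hN : 1 < N)
    (hh : IsMCPNegDensity κ N (Ioo a b) h) (hpos : ∀ x ∈ Ioo a b, 0 < h x) :
    AntitoneOn (fun x ↦ log (h x) - (N - 1) * log (sinh (√(-κ / (N - 1)) * (x - a))))
      (Ioo a b) := by
  intro x hx y hy hxy
  rcases hxy.eq_or_lt with rfl | hxy
  · rfl
  set c := √(-κ / (N - 1))
  have hN1 : 0 < N - 1 := sub_pos.mpr hN
  have hSx : 0 < sinh (c * (x - a)) := sinh_sqrt_neg_div_mul_pos hκ hN (by linarith [hx.1])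
  have hSy : 0 < sinh (c * (y - a)) := sinh_sqrt_neg_div_mul_pos hκ hN (by linarith [hy.1])
  have hhy : 0 < h y ^ (1 / (N - 1)) := rpow_pos_of_pos (hpos y hy) _
  have hlog := log_le_log (mul_pos (div_pos hSx hSy) hhy)
    (hh.sinh_div_mul_rpow_le_of_left_endpoint hκ hN hx.1 hxy hy.2)
  rw [log_mul (div_pos hSx hSy).ne' hhy.ne', log_div hSx.ne' hSy.ne',
    log_rpow (hpos y hy), log_rpow (hpos x hx)] at hlog
  have hscaled := mul_le_mul_of_nonneg_left hlog hN1.le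
  field_simp at hscaled
  linarith

theorem div_le_sinh_div_rpow (hκ : κ < 0) (hN : 1 < N)
    (hh : IsMCPNegDensity κ N (Ioo a b) h) (hpos : ∀ x ∈ Ioo a b, 0 < h x)
    {x y : ℝ} (hax : a < x) (hxy : x < y) (hyb : y < b) :
    h y / h x ≤
      (sinh (√(-κ / (N - 1)) * (y - a)) / sinh (√(-κ / (N - 1)) * (x - a))) ^ (N - 1) := by
  set c := √(-κ / (N - 1))
  have hSx : 0 < sinh (c * (x - a)) :=
    sinh_sqrt_neg_div_mul_pos hκ hN (by linarith)
  have hSy : 0 < sinh (c * (y - a)) :=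
    sinh_sqrt_neg_div_mul_pos hκ hN (by linarith)
  have hhx := hpos x ⟨hax, hxy.trans hyb⟩
  have hhy := hpos y ⟨hax.trans hxy, hyb⟩
  have hanti := antitoneOn_log_sub_log_sinh hκ hN hh hpos ⟨hax, hxy.trans hyb⟩
    ⟨hax.trans hxy, hyb⟩ hxy.le
  rw [← log_le_log_iff (div_pos hhy hhx) (rpow_pos_of_pos (div_pos hSy hSx) _),
    log_div hhy.ne' hhx.ne', log_rpow (div_pos hSy hSx), log_div hSy.ne' hSx.ne']
  simp only at hanti
  linarith

theorem div_le_sqrt_mul_cosh_div_sinh (hκ : κ < 0) (hN : 1 < N)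
    (hh : IsMCPNegDensity κ N (Ioo a b) h) (hpos : ∀ x ∈ Ioo a b, 0 < h x)
    {x d : ℝ} (hx : x ∈ Ioo a b) (hd : HasDerivAt h d x) :
    d / h x ≤ √(-κ * (N - 1)) *
      (cosh (√(-κ / (N - 1)) * (x - a)) / sinh (√(-κ / (N - 1)) * (x - a))) := by
  rw [sqrt_neg_mul_eq hN]
  set c := √(-κ / (N - 1))
  have hS : 0 < sinh (c * (x - a)) :=
    sinh_sqrt_neg_div_mul_pos hκ hN (sub_pos.mpr hx.1)
  have hderiv := (hd.log (hpos x hx).ne').fun_sub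
    (((((hasDerivAt_id' x).sub_const a).const_mul c).sinh.log hS.ne').const_mul (N - 1))
  have hnonpos := hderiv.hasDerivWithinAt.nonpos_of_antitoneOn
    ((PerfectSpace.univ_preperfect x (mem_univ x)).nhds_inter (isOpen_Ioo.mem_nhds hx))
    (by simpa using antitoneOn_log_sub_log_sinh hκ hN hh hpos)
  have hcoth : (N - 1) * (cosh (c * (x - a)) * (c * 1) / sinh (c * (x - a))) =
      (N - 1) * c * (cosh (c * (x - a)) / sinh (c * (x - a))) := by ring
  linarith

theorem sinh_div_rpow_le_div (hκ : κ < 0) (hN : 1 < N)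
    (hh : IsMCPNegDensity κ N (Ioo a b) h) (hpos : ∀ x ∈ Ioo a b, 0 < h x)
    {x y : ℝ} (hax : a < x) (hxy : x < y) (hyb : y < b) :
    (sinh (√(-κ / (N - 1)) * (b - y)) / sinh (√(-κ / (N - 1)) * (b - x))) ^ (N - 1) ≤
      h y / h x := by
  have hh' := hh.comp_neg
  rw [neg_Ioo] at hh'
  have hrefl := hh'.div_le_sinh_div_rpow hκ hN
    (fun z hz ↦ hpos (-z) (by simpa [← neg_Ioo] using hz)) (neg_lt_neg hyb) (neg_lt_neg hxy)
    (neg_lt_neg hax)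
  simp only [neg_neg, neg_sub_neg] at hrefl
  have hSx : 0 < sinh (√(-κ / (N - 1)) * (b - x)) :=
    sinh_sqrt_neg_div_mul_pos hκ hN (by linarith)
  have hSy : 0 < sinh (√(-κ / (N - 1)) * (b - y)) :=
    sinh_sqrt_neg_div_mul_pos hκ hN (by linarith)
  have hhx := hpos x ⟨hax, hxy.trans hyb⟩
  have hhy := hpos y ⟨hax.trans hxy, hyb⟩
  have hinv := inv_anti₀ (div_pos hhx hhy) hrefl
  rwa [inv_div, ← inv_rpow (div_pos hSx hSy).le, inv_div] at hinv

theorem neg_sqrt_mul_cosh_div_sinh_le_div (hκ : κ < 0) (hN : 1 < N)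
    (hh : IsMCPNegDensity κ N (Ioo a b) h) (hpos : ∀ x ∈ Ioo a b, 0 < h x)
    {x d : ℝ} (hx : x ∈ Ioo a b) (hd : HasDerivAt h d x) :
    -√(-κ * (N - 1)) *
        (cosh (√(-κ / (N - 1)) * (b - x)) / sinh (√(-κ / (N - 1)) * (b - x))) ≤
      d / h x := by
  have hh' := hh.comp_neg
  rw [neg_Ioo] at hh'
  have hd' : HasDerivAt (fun y ↦ h (-y)) (-d) (-x) := by
    rw [← mul_neg_one]
    exact ((neg_neg x).symm ▸ hd).comp (-x) (hasDerivAt_neg (-x))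
  have hrefl := hh'.div_le_sqrt_mul_cosh_div_sinh hκ hN
    (fun z hz ↦ hpos (-z) (by simpa [← neg_Ioo] using hz))
    ⟨neg_lt_neg hx.2, neg_lt_neg hx.1⟩ hd'
  simp only [neg_neg, neg_sub_neg] at hrefl
  rw [neg_div (h x) d] at hrefl
  linarith

end IsMCPNegDensity

theorem mcp_neg_density_comparison_general (κ N a b : ℝ) (h : ℝ → ℝ)
    (hκ : κ < 0) (hN : 1 < N)
    (hMCP : IsMCPNegDensity κ N (Set.Ioo a b) h)
    (hpos : ∀ x ∈ Set.Ioo a b, 0 < h x) :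
    (∀ x y : ℝ, a < x → x < y → y < b →
      (Real.sinh (Real.sqrt (-κ / (N - 1)) * (b - y)) /
          Real.sinh (Real.sqrt (-κ / (N - 1)) * (b - x))) ^ (N - 1) ≤ h y / h x ∧
        h y / h x ≤
          (Real.sinh (Real.sqrt (-κ / (N - 1)) * (y - a)) /
              Real.sinh (Real.sqrt (-κ / (N - 1)) * (x - a))) ^ (N - 1)) ∧
    (∀ x ∈ Set.Ioo a b, ∀ d : ℝ, HasDerivAt h d x →
      -Real.sqrt (-κ * (N - 1)) *
            (Real.cosh (Real.sqrt (-κ / (N - 1)) * (b - x)) /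
              Real.sinh (Real.sqrt (-κ / (N - 1)) * (b - x))) ≤ d / h x ∧
        d / h x ≤ Real.sqrt (-κ * (N - 1)) *
            (Real.cosh (Real.sqrt (-κ / (N - 1)) * (x - a)) /
              Real.sinh (Real.sqrt (-κ / (N - 1)) * (x - a)))) :=
  ⟨fun _ _ hax hxy hyb ↦ ⟨hMCP.sinh_div_rpow_le_div hκ hN hpos hax hxy hyb,
      hMCP.div_le_sinh_div_rpow hκ hN hpos hax hxy hyb⟩,
    fun _ hx _ hd ↦ ⟨hMCP.neg_sqrt_mul_cosh_div_sinh_le_div hκ hN hpos hx hd,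
      hMCP.div_le_sqrt_mul_cosh_div_sinh hκ hN hpos hx hd⟩⟩

/-- Comparison estimates for `MCP(κ,N)` densities (`κ < 0`) on a bounded
open interval `(a,b)`, with `c = √(-κ/(N-1))`. -/
theorem mcp_neg_density_comparison (κ N a b : ℝ) (h : ℝ → ℝ)
    (hκ : κ < 0) (hN : 1 < N) (hab : a < b)
    (hMCP : IsMCPNegDensity κ N (Set.Ioo a b) h)
    (hpos : ∀ x ∈ Set.Ioo a b, 0 < h x) :
    (∀ x y : ℝ, a < x → x < y → y < b →
      (Real.sinh (Real.sqrt (-κ / (N - 1)) * (b - y)) /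
          Real.sinh (Real.sqrt (-κ / (N - 1)) * (b - x))) ^ (N - 1) ≤ h y / h x ∧
        h y / h x ≤
          (Real.sinh (Real.sqrt (-κ / (N - 1)) * (y - a)) /
              Real.sinh (Real.sqrt (-κ / (N - 1)) * (x - a))) ^ (N - 1)) ∧
    (∀ x ∈ Set.Ioo a b, ∀ d : ℝ, HasDerivAt h d x →
      -Real.sqrt (-κ * (N - 1)) *
            (Real.cosh (Real.sqrt (-κ / (N - 1)) * (b - x)) /
              Real.sinh (Real.sqrt (-κ / (N - 1)) * (b - x))) ≤ d / h x ∧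
        d / h x ≤ Real.sqrt (-κ * (N - 1)) *
            (Real.cosh (Real.sqrt (-κ / (N - 1)) * (x - a)) /
              Real.sinh (Real.sqrt (-κ / (N - 1)) * (x - a)))) :=
  mcp_neg_density_comparison_general κ N a b h hκ hN hMCP hpos
end

section
/- Let κ > 0 and N > 1 be real, let (a,b) be a nonempty bounded open real interval with b−a ≤ π·√((N−1)/κ), and let h be an MCP(κ,N) density on (a,b) which is positive at every point of (a,b). Set c := √(κ/(N−1)). Then: (i) for all x, y with a < x < y < b one has (sin(c·(b−y))/sin(c·(b−x)))^{N−1} ≤ h(y)/h(x) ≤ (sin(c·(y−a))/sin(c·(x−a)))^{N−1}; and (ii) for every x ∈ (a,b) at which h is differentiable with derivative h'(x), one has −√(κ·(N−1))·cos(c·(b−x))/sin(c·(b−x)) ≤ h'(x)/h(x) ≤ √(κ·(N−1))·cos(c·(x−a))/sin(c·(x−a)). -/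
/-
Apply the MCP inequality to points u < x < y, with x as the interpolated point between y and u,
and let u ↓ a: this gives sin(c(x-a)) h(y)^{1/(N-1)} ≤ sin(c(y-a)) h(x)^{1/(N-1)}, i.e.
y ↦ log h(y) - (N-1) log sin(c(y-a)) is nonincreasing on (a,b). That is the upper bound in (i),
and differentiating it at x gives the upper bound in (ii). The MCP condition is invariant under
y ↦ -y, which swaps the roles of a and b and turns the upper bounds into the lower ones.
-/

/-- An `MCP(κ,N)` density on the set `I ⊆ ℝ`, for a constant positive curvature
parameter `κ`, with the explicit trigonometric distortion coefficients. -/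
def IsMCPPosDensity (κ N : ℝ) (I : Set ℝ) (h : ℝ → ℝ) : Prop :=
  (∀ x ∈ I, 0 ≤ h x) ∧
    ∀ x₀ ∈ I, ∀ x₁ ∈ I, x₀ ≠ x₁ → ∀ t ∈ Set.Icc (0 : ℝ) 1,
      Real.sin (Real.sqrt (κ / (N - 1)) * ((1 - t) * |x₁ - x₀|)) /
          Real.sin (Real.sqrt (κ / (N - 1)) * |x₁ - x₀|) * h x₀ ^ (1 / (N - 1)) ≤
        h ((1 - t) * x₀ + t * x₁) ^ (1 / (N - 1))

open Real Set Pointwise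

theorem sin_mul_pos_of_lt {c a b z : ℝ} (hc : 0 < c) (hcba : c * (b - a) ≤ π) (hz₀ : 0 < z)
    (hz : z < b - a) : 0 < sin (c * z) :=
  sin_pos_of_pos_of_lt_pi (mul_pos hc hz₀) ((mul_lt_mul_of_pos_left hz hc).trans_le hcba)

namespace IsMCPPosDensity

variable {κ N : ℝ} {I : Set ℝ} {h : ℝ → ℝ}

theorem comp_neg (hh : IsMCPPosDensity κ N I h) :
    IsMCPPosDensity κ N (-I) (fun x ↦ h (-x)) := by
  refine ⟨fun x hx ↦ hh.1 (-x) hx, fun x₀ hx₀ x₁ hx₁ hne t ht ↦ ?_⟩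
  have key := hh.2 (-x₀) hx₀ (-x₁) hx₁ (neg_injective.ne hne) t ht
  have hdist : |-x₁ - -x₀| = |x₁ - x₀| := by rw [neg_sub_neg, abs_sub_comm]
  have hmid : (1 - t) * -x₀ + t * -x₁ = -((1 - t) * x₀ + t * x₁) := by ring
  rwa [hdist, hmid] at key

theorem sin_mul_rpow_le (hh : IsMCPPosDensity κ N I h) {u x y : ℝ} (hu : u ∈ I) (hy : y ∈ I)
    (hux : u ≤ x) (hxy : x ≤ y) (hsin : 0 < sin (√(κ / (N - 1)) * (y - u))) :
    sin (√(κ / (N - 1)) * (x - u)) * h y ^ (1 / (N - 1)) ≤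
      sin (√(κ / (N - 1)) * (y - u)) * h x ^ (1 / (N - 1)) := by
  have hyu : 0 < y - u := by
    refine lt_of_le_of_ne (by linarith) fun h0 ↦ ?_
    simp [← h0] at hsin
  have key := hh.2 y hy u hu (by linarith) ((y - x) / (y - u))
    ⟨div_nonneg (by linarith) hyu.le, div_le_one_of_le₀ (by linarith) hyu.le⟩
  have hdist : |u - y| = y - u := by rw [abs_sub_comm, abs_of_pos hyu]
  have hlen : (1 - (y - x) / (y - u)) * (y - u) = x - u := by field_simp; ring
  have hmid : (1 - (y - x) / (y - u)) * y + (y - x) / (y - u) * u = x := by field_simp; ring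
  rw [hdist, hlen, hmid, div_mul_eq_mul_div, div_le_iff₀ hsin] at key
  linear_combination key

theorem sin_sub_left_mul_rpow_le {a b : ℝ} (hh : IsMCPPosDensity κ N (Ioo a b) h) (hκ : 0 < κ)
    (hN : 1 < N) (hcba : √(κ / (N - 1)) * (b - a) ≤ π) {x y : ℝ} (hax : a < x) (hxy : x < y)
    (hyb : y < b) :
    sin (√(κ / (N - 1)) * (x - a)) * h y ^ (1 / (N - 1)) ≤
      sin (√(κ / (N - 1)) * (y - a)) * h x ^ (1 / (N - 1)) := by
  have hc : 0 < √(κ / (N - 1)) := sqrt_pos.2 (div_pos hκ (sub_pos.2 hN))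
  have ha : a ∈ closure (Ioo a x) := by
    rw [closure_Ioo hax.ne]
    exact left_mem_Icc.2 hax.le
  refine le_on_closure (f := fun u ↦ sin (√(κ / (N - 1)) * (x - u)) * h y ^ (1 / (N - 1)))
    (g := fun u ↦ sin (√(κ / (N - 1)) * (y - u)) * h x ^ (1 / (N - 1))) (fun u hu ↦ ?_)
    (by fun_prop) (by fun_prop) ha
  exact hh.sin_mul_rpow_le ⟨hu.1, by linarith [hu.2]⟩ ⟨by linarith [hu.1], hyb⟩ hu.2.le hxy.le
    (sin_mul_pos_of_lt hc hcba (by linarith [hu.2]) (by linarith [hu.1]))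

theorem antitoneOn_log_sub_mul_log_sin {a b : ℝ} (hh : IsMCPPosDensity κ N (Ioo a b) h)
    (hκ : 0 < κ) (hN : 1 < N) (hcba : √(κ / (N - 1)) * (b - a) ≤ π)
    (hpos : ∀ x ∈ Ioo a b, 0 < h x) :
    AntitoneOn (fun y ↦ log (h y) - (N - 1) * log (sin (√(κ / (N - 1)) * (y - a)))) (Ioo a b) := by
  intro x hx y hy hxy
  rcases hxy.eq_or_lt with rfl | hxy
  · rfl
  have hc : 0 < √(κ / (N - 1)) := sqrt_pos.2 (div_pos hκ (sub_pos.2 hN))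
  have hsx := sin_mul_pos_of_lt hc hcba (sub_pos.2 hx.1) (by linarith [hx.2])
  have hsy := sin_mul_pos_of_lt hc hcba (sub_pos.2 hy.1) (by linarith [hy.2])
  have hhx := hpos x hx
  have hhy := hpos y hy
  have key := log_le_log (by positivity) (hh.sin_sub_left_mul_rpow_le hκ hN hcba hx.1 hxy hy.2)
  rw [log_mul hsx.ne' (by positivity), log_mul hsy.ne' (by positivity), log_rpow hhx,
    log_rpow hhy] at key
  have hN1 : 0 < N - 1 := sub_pos.2 hN
  have := mul_le_mul_of_nonneg_left key hN1.le
  field_simp at this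
  dsimp only
  linarith

theorem div_le_sin_div_sin_rpow {a b : ℝ} (hh : IsMCPPosDensity κ N (Ioo a b) h)
    (hκ : 0 < κ) (hN : 1 < N) (hcba : √(κ / (N - 1)) * (b - a) ≤ π)
    (hpos : ∀ x ∈ Ioo a b, 0 < h x) {x y : ℝ} (hax : a < x) (hxy : x < y) (hyb : y < b) :
    h y / h x ≤ (sin (√(κ / (N - 1)) * (y - a)) / sin (√(κ / (N - 1)) * (x - a))) ^ (N - 1) := by
  have hx : x ∈ Ioo a b := ⟨hax, hxy.trans hyb⟩
  have hy : y ∈ Ioo a b := ⟨hax.trans hxy, hyb⟩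
  have hc : 0 < √(κ / (N - 1)) := sqrt_pos.2 (div_pos hκ (sub_pos.2 hN))
  have hsx := sin_mul_pos_of_lt hc hcba (sub_pos.2 hax) (by linarith)
  have hsy := sin_mul_pos_of_lt hc hcba (sub_pos.2 (hax.trans hxy)) (by linarith)
  have key := hh.antitoneOn_log_sub_mul_log_sin hκ hN hcba hpos hx hy hxy.le
  rw [← exp_log (div_pos (hpos y hy) (hpos x hx)), rpow_def_of_pos (div_pos hsy hsx), exp_le_exp,
    log_div (hpos y hy).ne' (hpos x hx).ne', log_div hsy.ne' hsx.ne']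
  linarith

theorem div_le_of_hasDerivAt {a b : ℝ} (hh : IsMCPPosDensity κ N (Ioo a b) h)
    (hκ : 0 < κ) (hN : 1 < N) (hcba : √(κ / (N - 1)) * (b - a) ≤ π)
    (hpos : ∀ x ∈ Ioo a b, 0 < h x) {x d : ℝ} (hx : x ∈ Ioo a b) (hd : HasDerivAt h d x) :
    d / h x ≤ √(κ * (N - 1)) *
      (cos (√(κ / (N - 1)) * (x - a)) / sin (√(κ / (N - 1)) * (x - a))) := by
  set c := √(κ / (N - 1))
  have hN1 : 0 < N - 1 := sub_pos.2 hN
  have hsx := sin_mul_pos_of_lt (sqrt_pos.2 (div_pos hκ hN1)) hcba (sub_pos.2 hx.1)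
    (by linarith [hx.2])
  have hψ : HasDerivAt (fun y ↦ log (h y) - (N - 1) * log (sin (c * (y - a))))
      (d / h x - (N - 1) * (cos (c * (x - a)) * (c * 1) / sin (c * (x - a)))) x :=
    (hd.log (hpos x hx).ne').sub <| HasDerivAt.const_mul (N - 1) <|
      (((hasDerivAt_id' x).sub_const a).const_mul c).sin.log hsx.ne'
  have key := hψ.hasDerivWithinAt.nonpos_of_antitoneOn (uniqueDiffOn_Ioo a b x hx).accPt
    (hh.antitoneOn_log_sub_mul_log_sin hκ hN hcba hpos)
  have hsqrt : √(κ * (N - 1)) = (N - 1) * c := by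
    rw [show κ * (N - 1) = κ / (N - 1) * (N - 1) ^ 2 by field_simp, sqrt_mul' _ (sq_nonneg _),
      sqrt_sq hN1.le, mul_comm]
  rw [hsqrt]
  linarith [show (N - 1) * c * (cos (c * (x - a)) / sin (c * (x - a))) =
    (N - 1) * (cos (c * (x - a)) * (c * 1) / sin (c * (x - a))) by ring]

theorem sin_div_sin_rpow_le_div {a b : ℝ} (hh : IsMCPPosDensity κ N (Ioo a b) h)
    (hκ : 0 < κ) (hN : 1 < N) (hcba : √(κ / (N - 1)) * (b - a) ≤ π)
    (hpos : ∀ x ∈ Ioo a b, 0 < h x) {x y : ℝ} (hax : a < x) (hxy : x < y) (hyb : y < b) :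
    (sin (√(κ / (N - 1)) * (b - y)) / sin (√(κ / (N - 1)) * (b - x))) ^ (N - 1) ≤ h y / h x := by
  have hrefl : IsMCPPosDensity κ N (Ioo (-b) (-a)) (fun x ↦ h (-x)) := by
    simpa only [neg_Ioo] using hh.comp_neg
  have key := hrefl.div_le_sin_div_sin_rpow hκ hN (by rwa [neg_sub_neg])
    (fun z hz ↦ hpos _ ⟨lt_neg_of_lt_neg hz.2, neg_lt_of_neg_lt hz.1⟩)
    (neg_lt_neg hyb) (neg_lt_neg hxy) (neg_lt_neg hax)
  simp only [neg_neg, neg_sub_neg] at key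
  have hc : 0 < √(κ / (N - 1)) := sqrt_pos.2 (div_pos hκ (sub_pos.2 hN))
  have hsx := sin_mul_pos_of_lt hc hcba (sub_pos.2 (hxy.trans hyb)) (by linarith)
  have hsy := sin_mul_pos_of_lt hc hcba (sub_pos.2 hyb) (by linarith)
  rw [← inv_div (h x), ← inv_div (sin _), inv_rpow (div_pos hsx hsy).le]
  exact inv_anti₀ (div_pos (hpos x ⟨hax, hxy.trans hyb⟩) (hpos y ⟨hax.trans hxy, hyb⟩)) key

theorem neg_mul_le_div_of_hasDerivAt {a b : ℝ} (hh : IsMCPPosDensity κ N (Ioo a b) h)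
    (hκ : 0 < κ) (hN : 1 < N) (hcba : √(κ / (N - 1)) * (b - a) ≤ π)
    (hpos : ∀ x ∈ Ioo a b, 0 < h x) {x d : ℝ} (hx : x ∈ Ioo a b) (hd : HasDerivAt h d x) :
    -√(κ * (N - 1)) *
      (cos (√(κ / (N - 1)) * (b - x)) / sin (√(κ / (N - 1)) * (b - x))) ≤ d / h x := by
  have hrefl : IsMCPPosDensity κ N (Ioo (-b) (-a)) (fun x ↦ h (-x)) := by
    simpa only [neg_Ioo] using hh.comp_neg
  have hd' : HasDerivAt (fun x ↦ h (-x)) (d * -1) (-x) :=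
    (neg_neg x ▸ hd).comp (-x) (hasDerivAt_neg (-x))
  have key := hrefl.div_le_of_hasDerivAt hκ hN (by rwa [neg_sub_neg])
    (fun z hz ↦ hpos _ ⟨lt_neg_of_lt_neg hz.2, neg_lt_of_neg_lt hz.1⟩)
    ⟨neg_lt_neg hx.2, neg_lt_neg hx.1⟩ hd'
  simp only [neg_neg, neg_sub_neg, mul_neg_one, neg_div] at key
  linarith

end IsMCPPosDensity

theorem mcp_pos_density_comparison_general (κ N a b : ℝ) (h : ℝ → ℝ)
    (hκ : 0 < κ) (hN : 1 < N)
    (hdiam : b - a ≤ Real.pi * Real.sqrt ((N - 1) / κ))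
    (hMCP : IsMCPPosDensity κ N (Set.Ioo a b) h)
    (hpos : ∀ x ∈ Set.Ioo a b, 0 < h x) :
    (∀ x y : ℝ, a < x → x < y → y < b →
      (Real.sin (Real.sqrt (κ / (N - 1)) * (b - y)) /
          Real.sin (Real.sqrt (κ / (N - 1)) * (b - x))) ^ (N - 1) ≤ h y / h x ∧
        h y / h x ≤
          (Real.sin (Real.sqrt (κ / (N - 1)) * (y - a)) /
              Real.sin (Real.sqrt (κ / (N - 1)) * (x - a))) ^ (N - 1)) ∧
    (∀ x ∈ Set.Ioo a b, ∀ d : ℝ, HasDerivAt h d x →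
      -Real.sqrt (κ * (N - 1)) *
            (Real.cos (Real.sqrt (κ / (N - 1)) * (b - x)) /
              Real.sin (Real.sqrt (κ / (N - 1)) * (b - x))) ≤ d / h x ∧
        d / h x ≤ Real.sqrt (κ * (N - 1)) *
            (Real.cos (Real.sqrt (κ / (N - 1)) * (x - a)) /
              Real.sin (Real.sqrt (κ / (N - 1)) * (x - a)))) := by
  have hN1 : 0 < N - 1 := sub_pos.2 hN
  have hcba : √(κ / (N - 1)) * (b - a) ≤ π := by
    have hinv : √(κ / (N - 1)) * √((N - 1) / κ) = 1 := by
      rw [← sqrt_mul (div_pos hκ hN1).le, show κ / (N - 1) * ((N - 1) / κ) = 1 by field_simp,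
        sqrt_one]
    calc √(κ / (N - 1)) * (b - a) ≤ √(κ / (N - 1)) * (π * √((N - 1) / κ)) := by gcongr
      _ = π := by rw [mul_left_comm, hinv, mul_one]
  exact ⟨fun x y hax hxy hyb ↦ ⟨hMCP.sin_div_sin_rpow_le_div hκ hN hcba hpos hax hxy hyb,
      hMCP.div_le_sin_div_sin_rpow hκ hN hcba hpos hax hxy hyb⟩,
    fun x hx d hd ↦ ⟨hMCP.neg_mul_le_div_of_hasDerivAt hκ hN hcba hpos hx hd,
      hMCP.div_le_of_hasDerivAt hκ hN hcba hpos hx hd⟩⟩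

/-- Comparison estimates for `MCP(κ,N)` densities (`κ > 0`) on a bounded
open interval `(a,b)` of length at most `π·√((N-1)/κ)`, with `c = √(κ/(N-1))`. -/
theorem mcp_pos_density_comparison (κ N a b : ℝ) (h : ℝ → ℝ)
    (hκ : 0 < κ) (hN : 1 < N) (hab : a < b)
    (hdiam : b - a ≤ Real.pi * Real.sqrt ((N - 1) / κ))
    (hMCP : IsMCPPosDensity κ N (Set.Ioo a b) h)
    (hpos : ∀ x ∈ Set.Ioo a b, 0 < h x) :
    (∀ x y : ℝ, a < x → x < y → y < b →
      (Real.sin (Real.sqrt (κ / (N - 1)) * (b - y)) /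
          Real.sin (Real.sqrt (κ / (N - 1)) * (b - x))) ^ (N - 1) ≤ h y / h x ∧
        h y / h x ≤
          (Real.sin (Real.sqrt (κ / (N - 1)) * (y - a)) /
              Real.sin (Real.sqrt (κ / (N - 1)) * (x - a))) ^ (N - 1)) ∧
    (∀ x ∈ Set.Ioo a b, ∀ d : ℝ, HasDerivAt h d x →
      -Real.sqrt (κ * (N - 1)) *
            (Real.cos (Real.sqrt (κ / (N - 1)) * (b - x)) /
              Real.sin (Real.sqrt (κ / (N - 1)) * (b - x))) ≤ d / h x ∧
        d / h x ≤ Real.sqrt (κ * (N - 1)) *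
            (Real.cos (Real.sqrt (κ / (N - 1)) * (x - a)) /
              Real.sin (Real.sqrt (κ / (N - 1)) * (x - a)))) :=
  mcp_pos_density_comparison_general κ N a b h hκ hN hdiam hMCP hpos
end

section
/- Let κ < 0 and N > 1 be real. There exists a nondecreasing function C : (0,∞) → (0,∞) with C(r) → ∞ as r → ∞ such that for every nonempty bounded open real interval (a,b) and every MCP(κ,N) density h on (a,b) the following holds: h is differentiable at Lebesgue-almost every point of (a,b), and ∫_{(a,b)} |h'(s)| ds ≤ (1/(b−a)) · C(b−a) · ∫_{(a,b)} h(s) ds, where h' denotes the derivative of h (set equal to 0 at points of non-differentiability) and the integrals are Lebesgue integrals. -/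
/-!
Write `n = N - 1`, `c = √(-κ / n)`, `L = b - a` and `m` for the midpoint of `(a, b)`. Raised to
the power `n`, the MCP inequality bounds `h` at a point `z` between `x₀` and `x₁` from below by
`(sinh (c |x₁ - z|) / sinh (c |x₁ - x₀|)) ^ n * h x₀`. Choosing `x₁` at distance at least `L / 4`
from `z` makes this factor at least `Λ⁻¹`, `Λ = (sinh (c L) / sinh (c L / 4)) ^ n`, which gives the
Harnack bounds `h ≤ Λ h m` on `(a, b)` and `h m ≤ Λ h` on `(m, m + L / 8)`, hence
`L h m ≤ 8 Λ ∫ h`. The same inequality, through `1 - q ^ n ≤ max n 1 (1 - q)` and the mean value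
theorem for `sinh`, shows that `h + K x` is monotone on the left half and `K x - h` on the right
half, with `K L` of order `h m`. Such functions are differentiable a.e. with
`∫ |h'| ≤ 2 h m + 2 K L`, and combining the two estimates gives the theorem.
-/

open Set MeasureTheory

open Real Filter

section OneSidedLipschitz

variable {f : ℝ → ℝ} {K α β : ℝ}

lemma ae_differentiableAt_of_monotoneOn_add_mul
    (hf : MonotoneOn (fun x => f x + K * x) (Icc α β)) :
    ∀ᵐ x, x ∈ Ioo α β → DifferentiableAt ℝ f x := by
  filter_upwards [hf.ae_differentiableWithinAt_of_mem] with x hx hxαβ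
  have hg := (hx (Ioo_subset_Icc_self hxαβ)).differentiableAt (Icc_mem_nhds hxαβ.1 hxαβ.2)
  simpa using hg.fun_sub (differentiableAt_id.const_mul K)

lemma aemeasurable_of_monotoneOn_add_mul
    (hf : MonotoneOn (fun x => f x + K * x) (Icc α β)) :
    AEMeasurable f (volume.restrict (Icc α β)) := by
  simpa [Pi.sub_def] using (aemeasurable_restrict_of_monotoneOn measurableSet_Icc hf).sub
    (measurable_id.const_mul K).aemeasurable

lemma abs_deriv_le_of_monotoneOn_add_mul (hK : 0 ≤ K)
    (hf : MonotoneOn (fun x => f x + K * x) (Icc α β)) {x : ℝ} (hx : x ∈ Ioo α β) :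
    |deriv f x| ≤ deriv (fun x => f x + K * x) x + K := by
  have hg : 0 ≤ deriv (fun x => f x + K * x) x := by
    rw [← derivWithin_of_mem_nhds (Icc_mem_nhds hx.1 hx.2)]
    exact hf.derivWithin_nonneg
  by_cases hfx : DifferentiableAt ℝ f x
  · have hd : deriv (fun x => f x + K * x) x = deriv f x + K * 1 :=
      (hfx.hasDerivAt.add ((hasDerivAt_id' x).const_mul K)).deriv
    rw [hd, mul_one] at hg ⊢
    exact abs_le.2 ⟨by linarith, by linarith⟩
  · rw [deriv_zero_of_not_differentiableAt hfx, abs_zero]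
    linarith

lemma intervalIntegrable_abs_deriv_of_monotoneOn_add_mul (hK : 0 ≤ K) (hαβ : α ≤ β)
    (hf : MonotoneOn (fun x => f x + K * x) (Icc α β)) :
    IntervalIntegrable (fun x => |deriv f x|) volume α β := by
  have hg : MonotoneOn (fun x => f x + K * x) (uIcc α β) := by rwa [uIcc_of_le hαβ]
  have hi : IntervalIntegrable (fun x => deriv (fun x => f x + K * x) x + K) volume α β :=
    hg.intervalIntegrable_deriv.add intervalIntegrable_const
  refine hi.mono_fun
    (measurable_deriv f).abs.aestronglyMeasurable ?_
  rw [uIoc_of_le hαβ, ← restrict_Ioo_eq_restrict_Ioc]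
  refine (ae_restrict_iff' measurableSet_Ioo).2 (Eventually.of_forall fun x hx => ?_)
  simp only [Real.norm_eq_abs, abs_abs]
  exact (abs_deriv_le_of_monotoneOn_add_mul hK hf hx).trans (le_abs_self _)

lemma integral_abs_deriv_le_of_monotoneOn_add_mul (hK : 0 ≤ K) (hαβ : α ≤ β)
    (hf : MonotoneOn (fun x => f x + K * x) (Icc α β)) :
    ∫ x in α..β, |deriv f x| ≤ f β - f α + 2 * K * (β - α) := by
  have hg : MonotoneOn (fun x => f x + K * x) (uIcc α β) := by rwa [uIcc_of_le hαβ]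
  have hgαβ : f α + K * α ≤ f β + K * β :=
    hf ⟨le_rfl, hαβ⟩ ⟨hαβ, le_rfl⟩ hαβ
  have hmem := hg.intervalIntegral_deriv_mem_uIcc
  rw [uIcc_of_le (sub_nonneg.2 hgαβ)] at hmem
  calc ∫ x in α..β, |deriv f x|
      ≤ ∫ x in α..β, (deriv (fun x => f x + K * x) x + K) := by
        refine intervalIntegral.integral_mono_ae_restrict hαβ
          (intervalIntegrable_abs_deriv_of_monotoneOn_add_mul hK hαβ hf)
          (hg.intervalIntegrable_deriv.add intervalIntegrable_const) ?_
        rw [← restrict_Ioo_eq_restrict_Icc]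
        exact (ae_restrict_iff' measurableSet_Ioo).2
          (Eventually.of_forall fun x hx => abs_deriv_le_of_monotoneOn_add_mul hK hf hx)
    _ = (∫ x in α..β, deriv (fun x => f x + K * x) x) + K * (β - α) := by
        rw [intervalIntegral.integral_add hg.intervalIntegrable_deriv intervalIntegrable_const,
          intervalIntegral.integral_const, smul_eq_mul, mul_comm]
    _ ≤ f β + K * β - (f α + K * α) + K * (β - α) := by gcongr; exact hmem.2
    _ = f β - f α + 2 * K * (β - α) := by ring

end OneSidedLipschitz

lemma sinh_sub_sinh_le_cosh_mul {x y z : ℝ} (hx : 0 ≤ x) (hxy : x ≤ y) (hyz : y ≤ z) :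
    sinh y - sinh x ≤ cosh z * (y - x) := by
  refine (convex_Icc x y).image_sub_le_mul_sub_of_deriv_le continuous_sinh.continuousOn
    differentiable_sinh.differentiableOn (fun t ht => ?_) x ⟨le_rfl, hxy⟩ y ⟨hxy, le_rfl⟩ hxy
  rw [interior_Icc] at ht
  rw [Real.deriv_sinh]
  exact cosh_strictMonoOn.monotoneOn (mem_Ici.2 (by linarith [ht.1])) (mem_Ici.2 (by linarith))
    (by linarith [ht.2])

lemma sinh_eq_four_mul_sinh_mul_cosh_mul_cosh (x : ℝ) :
    sinh x = 4 * sinh (x / 4) * cosh (x / 4) * cosh (x / 2) := by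
  have h₂ := sinh_two_mul (x / 4)
  have h₄ := sinh_two_mul (x / 2)
  rw [show 2 * (x / 4) = x / 2 by ring] at h₂
  rw [show 2 * (x / 2) = x by ring] at h₄
  rw [h₄, h₂]
  ring

lemma one_sub_sinh_div_sinh_le {c ℓ s d L : ℝ} (hc : 0 < c) (hℓ : 0 < ℓ) (hℓs : ℓ ≤ s)
    (hsd : s ≤ d) (hdL : d ≤ L) :
    1 - sinh (c * s) / sinh (c * d) ≤ cosh (c * L) * (d - s) / ℓ := by
  have hcℓ : c * ℓ ≤ sinh (c * d) :=
    (self_le_sinh_iff.2 (by positivity)).trans (sinh_le_sinh.2 (by gcongr; linarith))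
  have hd : 0 < sinh (c * d) := lt_of_lt_of_le (by positivity) hcℓ
  have hmvt : sinh (c * d) - sinh (c * s) ≤ cosh (c * L) * (c * d - c * s) :=
    sinh_sub_sinh_le_cosh_mul (by nlinarith) (by gcongr) (by gcongr)
  rw [one_sub_div hd.ne', div_le_div_iff₀ hd hℓ]
  have hcosh : 0 ≤ cosh (c * L) * (d - s) := mul_nonneg (cosh_pos _).le (by linarith)
  calc (sinh (c * d) - sinh (c * s)) * ℓ ≤ cosh (c * L) * (c * d - c * s) * ℓ := by gcongr
    _ = cosh (c * L) * (d - s) * (c * ℓ) := by ring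
    _ ≤ cosh (c * L) * (d - s) * sinh (c * d) := by gcongr

lemma one_sub_rpow_le_max_mul (n : ℝ) {q : ℝ} (hq₀ : 0 < q) (hq₁ : q ≤ 1) :
    1 - q ^ n ≤ max n 1 * (1 - q) := by
  have h₁ : q ^ max n 1 ≤ q ^ n := rpow_le_rpow_of_exponent_ge hq₀ hq₁ (le_max_left n 1)
  have h₂ := one_add_mul_self_le_rpow_one_add (s := q - 1) (by linarith) (le_max_right n 1)
  rw [add_sub_cancel] at h₂
  linarith

/-- Equals `(sinh (c * r) / sinh (c * r / 4)) ^ n`. -/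
noncomputable def harnackConst (c n r : ℝ) : ℝ :=
  (4 * cosh (c * r / 4) * cosh (c * r / 2)) ^ n

lemma one_le_harnackConst (c r : ℝ) {n : ℝ} (hn : 0 ≤ n) : 1 ≤ harnackConst c n r :=
  one_le_rpow (by nlinarith [one_le_cosh (c * r / 4), one_le_cosh (c * r / 2)]) hn

lemma harnackConst_monotoneOn {c n : ℝ} (hc : 0 ≤ c) (hn : 0 ≤ n) :
    MonotoneOn (harnackConst c n) (Ici 0) := by
  intro r (hr : 0 ≤ r) s (hs : 0 ≤ s) hrs
  have hcosh : ∀ k : ℝ, 0 < k → cosh (c * r / k) ≤ cosh (c * s / k) := fun k hk =>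
    cosh_strictMonoOn.monotoneOn (mem_Ici.2 (by positivity)) (mem_Ici.2 (by positivity))
      (by gcongr)
  exact rpow_le_rpow (by positivity) (by gcongr <;> exact hcosh _ (by norm_num)) hn

lemma inv_harnackConst_le_rpow {c n L s d : ℝ} (hc : 0 < c) (hn : 0 ≤ n) (hL : 0 < L)
    (hs : L / 4 ≤ s) (hsd : s ≤ d) (hd : d ≤ L) :
    (harnackConst c n L)⁻¹ ≤ (sinh (c * s) / sinh (c * d)) ^ n := by
  have h₄ : 0 < sinh (c * L / 4) := sinh_pos_iff.2 (by positivity)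
  have hq : (4 * cosh (c * L / 4) * cosh (c * L / 2))⁻¹ ≤ sinh (c * s) / sinh (c * d) := by
    calc (4 * cosh (c * L / 4) * cosh (c * L / 2))⁻¹ = sinh (c * L / 4) / sinh (c * L) := by
          rw [sinh_eq_four_mul_sinh_mul_cosh_mul_cosh (c * L)]
          field_simp
      _ ≤ sinh (c * s) / sinh (c * d) :=
          div_le_div₀ (sinh_nonneg_iff.2 (by nlinarith)) (sinh_le_sinh.2 (by nlinarith))
            (sinh_pos_iff.2 (by nlinarith)) (sinh_le_sinh.2 (by gcongr))
  rw [harnackConst, ← inv_rpow (by positivity)]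
  exact rpow_le_rpow (by positivity) hq hn

lemma abs_sub_eq_abs_sub_add_abs_sub_of_mem_uIcc {x₀ x₁ z : ℝ} (hz : z ∈ uIcc x₀ x₁) :
    |x₁ - x₀| = |x₁ - z| + |z - x₀| := by
  rcases mem_uIcc.1 hz with ⟨h₀, h₁⟩ | ⟨h₁, h₀⟩
  · rw [abs_of_nonneg (by linarith), abs_of_nonneg (by linarith), abs_of_nonneg (by linarith)]
    ring
  · rw [abs_of_nonpos (by linarith), abs_of_nonpos (by linarith), abs_of_nonpos (by linarith)]
    ring

lemma exists_far_of_mem_uIcc_midpoint {a b x₀ z : ℝ} (hx₀ : x₀ ∈ Ioo a b)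
    (hz : z ∈ uIcc x₀ ((a + b) / 2)) :
    ∃ x₁ ∈ Ioo a b, z ∈ uIcc x₀ x₁ ∧ (b - a) / 4 ≤ |x₁ - z| := by
  obtain ⟨ha, hb⟩ := hx₀
  rcases le_total x₀ ((a + b) / 2) with hm | hm
  · rw [uIcc_of_le hm] at hz
    refine ⟨(a + 3 * b) / 4, ⟨by linarith, by linarith⟩, ?_, ?_⟩
    · rw [uIcc_of_le (by linarith)]
      exact ⟨hz.1, by linarith [hz.2]⟩
    · rw [abs_of_nonneg (by linarith [hz.2])]
      linarith [hz.2]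
  · rw [uIcc_of_ge hm] at hz
    refine ⟨(3 * a + b) / 4, ⟨by linarith, by linarith⟩, ?_, ?_⟩
    · rw [uIcc_of_ge (by linarith)]
      exact ⟨by linarith [hz.1], hz.2⟩
    · rw [abs_of_nonpos (by linarith [hz.1])]
      linarith [hz.1]

noncomputable def variationConst (c n r : ℝ) : ℝ :=
  16 * harnackConst c n r * (1 + 4 * max n 1 * harnackConst c n r * cosh (c * r))

lemma variationConst_pos (c : ℝ) {n : ℝ} (hn : 0 ≤ n) (r : ℝ) : 0 < variationConst c n r := by
  have := one_le_harnackConst c r hn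
  unfold variationConst
  positivity

lemma variationConst_monotoneOn {c n : ℝ} (hc : 0 ≤ c) (hn : 0 ≤ n) :
    MonotoneOn (variationConst c n) (Ici 0) := by
  intro r (hr : 0 ≤ r) s (hs : 0 ≤ s) hrs
  have hΛ := harnackConst_monotoneOn hc hn hr hs hrs
  have hcosh : cosh (c * r) ≤ cosh (c * s) :=
    cosh_strictMonoOn.monotoneOn (mem_Ici.2 (by positivity)) (mem_Ici.2 (by positivity))
      (by gcongr)
  have := one_le_harnackConst c r hn
  have := one_le_harnackConst c s hn
  unfold variationConst
  gcongr

lemma tendsto_variationConst {c n : ℝ} (hc : 0 < c) (hn : 0 ≤ n) :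
    Tendsto (variationConst c n) atTop atTop := by
  refine tendsto_atTop_mono' _ ?_ (tendsto_id.const_mul_atTop hc)
  filter_upwards [eventually_ge_atTop 0] with r hr
  have hΛ := one_le_harnackConst c r hn
  have hmax : 1 ≤ max n 1 := le_max_right n 1
  calc c * id r ≤ sinh (c * r) := self_le_sinh_iff.2 (by positivity)
    _ ≤ 16 * 1 * (1 + 4 * 1 * 1 * cosh (c * r)) := by
        linarith [sinh_lt_cosh (c * r), cosh_pos (c * r)]
    _ ≤ variationConst c n r := by unfold variationConst; gcongr

/-- `IsMCPNegDensity κ N` raised to the power `n = N - 1`, with `c = √(-κ / (N - 1))`. -/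
def SinhDistortionBound (c n : ℝ) (I : Set ℝ) (h : ℝ → ℝ) : Prop :=
  ∀ x₀ ∈ I, ∀ x₁ ∈ I, ∀ z ∈ uIcc x₀ x₁,
    (sinh (c * |x₁ - z|) / sinh (c * |x₁ - x₀|)) ^ n * h x₀ ≤ h z

lemma IsMCPNegDensity.sinhDistortionBound {κ N : ℝ} {I : Set ℝ} {h : ℝ → ℝ} (hN : 1 < N)
    (hI : I.OrdConnected) (hh : IsMCPNegDensity κ N I h) :
    SinhDistortionBound (√(-κ / (N - 1))) (N - 1) I h := by
  intro x₀ hx₀ x₁ hx₁ z hz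
  have hzI := hI.uIcc_subset hx₀ hx₁ hz
  rw [← segment_eq_uIcc] at hz
  obtain ⟨s, t, hs, ht, hst, rfl⟩ := hz
  obtain rfl : s = 1 - t := by linarith
  simp only [smul_eq_mul] at hzI ⊢
  rcases eq_or_ne x₀ x₁ with rfl | hne
  · rw [show (1 - t) * x₀ + t * x₀ = x₀ by ring, sub_self, abs_zero, mul_zero, sinh_zero,
      div_zero, zero_rpow (by linarith), zero_mul]
    exact hh.1 x₀ hx₀
  have key := hh.2 x₀ hx₀ x₁ hx₁ hne t ⟨ht, by linarith⟩
  have hdist : (1 - t) * |x₁ - x₀| = |x₁ - ((1 - t) * x₀ + t * x₁)| := by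
    rw [show x₁ - ((1 - t) * x₀ + t * x₁) = (1 - t) * (x₁ - x₀) by ring, abs_mul,
      abs_of_nonneg hs]
  rw [hdist] at key
  have hn : 0 < N - 1 := by linarith
  have hq : 0 ≤ sinh (√(-κ / (N - 1)) * |x₁ - ((1 - t) * x₀ + t * x₁)|) /
      sinh (√(-κ / (N - 1)) * |x₁ - x₀|) := by
    apply div_nonneg <;> exact sinh_nonneg_iff.2 (by positivity)
  have hpow := rpow_le_rpow (mul_nonneg hq (rpow_nonneg (hh.1 x₀ hx₀) _)) key hn.le
  rwa [mul_rpow hq (rpow_nonneg (hh.1 x₀ hx₀) _), ← rpow_mul (hh.1 x₀ hx₀),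
    ← rpow_mul (hh.1 _ hzI), one_div_mul_cancel hn.ne', rpow_one, rpow_one] at hpow

noncomputable def oneSidedSlope (c n a b : ℝ) (h : ℝ → ℝ) : ℝ :=
  4 * max n 1 * cosh (c * (b - a)) / (b - a) * (harnackConst c n (b - a) * h ((a + b) / 2))

namespace SinhDistortionBound

variable {c n a b : ℝ} {I : Set ℝ} {h : ℝ → ℝ}

/- With `x₀ = x₁ = z` the distortion ratio is `0 / 0 = 0`, so the bound already contains
`0 ≤ h z`. -/
lemma nonneg (hn : n ≠ 0) (hh : SinhDistortionBound c n I h) {z : ℝ} (hz : z ∈ I) : 0 ≤ h z := by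
  simpa [zero_rpow hn] using hh z hz z hz z (by simp)

lemma le_harnackConst_mul (hc : 0 < c) (hn : 0 < n) (hh : SinhDistortionBound c n (Ioo a b) h)
    {x₀ x₁ z : ℝ} (hx₀ : x₀ ∈ Ioo a b) (hx₁ : x₁ ∈ Ioo a b) (hz : z ∈ uIcc x₀ x₁)
    (hfar : (b - a) / 4 ≤ |x₁ - z|) : h x₀ ≤ harnackConst c n (b - a) * h z := by
  have hΛ := one_le_harnackConst c (b - a) hn.le
  have hq := inv_harnackConst_le_rpow hc hn.le (by linarith [hx₀.1, hx₀.2]) hfar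
    (abs_sub_right_of_mem_uIcc hz)
    (abs_sub_lt_iff.2 ⟨by linarith [hx₀.1, hx₁.2], by linarith [hx₀.2, hx₁.1]⟩).le
  have := (mul_le_mul_of_nonneg_right hq (hh.nonneg hn.ne' hx₀)).trans (hh x₀ hx₀ x₁ hx₁ z hz)
  rwa [inv_mul_le_iff₀ (by linarith)] at this

lemma sub_le_mul_abs_sub_mul (hc : 0 < c) (hn : 0 < n) (hh : SinhDistortionBound c n (Ioo a b) h)
    {x₀ x₁ z : ℝ} (hx₀ : x₀ ∈ Ioo a b) (hx₁ : x₁ ∈ Ioo a b) (hz : z ∈ uIcc x₀ x₁)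
    (hfar : (b - a) / 4 ≤ |x₁ - z|) :
    h x₀ - h z ≤ 4 * max n 1 * cosh (c * (b - a)) / (b - a) * |z - x₀| * h x₀ := by
  have hL : 0 < b - a := by linarith [hx₀.1, hx₀.2]
  have hsd : |x₁ - z| ≤ |x₁ - x₀| := abs_sub_right_of_mem_uIcc hz
  have hdL : |x₁ - x₀| ≤ b - a :=
    (abs_sub_lt_iff.2 ⟨by linarith [hx₀.1, hx₁.2], by linarith [hx₀.2, hx₁.1]⟩).le
  have hs : 0 < sinh (c * |x₁ - z|) := sinh_pos_iff.2 (by nlinarith)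
  have hsd' : sinh (c * |x₁ - z|) ≤ sinh (c * |x₁ - x₀|) := sinh_le_sinh.2 (by gcongr)
  set q := sinh (c * |x₁ - z|) / sinh (c * |x₁ - x₀|)
  have hq₀ : 0 < q := div_pos hs (hs.trans_le hsd')
  have hq₁ : q ≤ 1 := div_le_one_of_le₀ hsd' (hs.trans_le hsd').le
  have h1q := one_sub_sinh_div_sinh_le hc (by positivity) hfar hsd hdL
  rw [show |x₁ - x₀| - |x₁ - z| = |z - x₀| by
    rw [abs_sub_eq_abs_sub_add_abs_sub_of_mem_uIcc hz]; ring] at h1q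
  have hx₀' := hh.nonneg hn.ne' hx₀
  calc h x₀ - h z ≤ (1 - q ^ n) * h x₀ := by linarith [hh x₀ hx₀ x₁ hx₁ z hz]
    _ ≤ max n 1 * (1 - q) * h x₀ := by gcongr; exact one_sub_rpow_le_max_mul n hq₀ hq₁
    _ ≤ max n 1 * (cosh (c * (b - a)) * |z - x₀| / ((b - a) / 4)) * h x₀ := by gcongr
    _ = 4 * max n 1 * cosh (c * (b - a)) / (b - a) * |z - x₀| * h x₀ := by
        field_simp

lemma le_harnackConst_mul_midpoint (hc : 0 < c) (hn : 0 < n)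
    (hh : SinhDistortionBound c n (Ioo a b) h) {x : ℝ} (hx : x ∈ Ioo a b) :
    h x ≤ harnackConst c n (b - a) * h ((a + b) / 2) := by
  obtain ⟨x₁, hx₁, hm, hfar⟩ := exists_far_of_mem_uIcc_midpoint hx right_mem_uIcc
  exact hh.le_harnackConst_mul hc hn hx hx₁ hm hfar

lemma oneSidedSlope_nonneg (hn : 0 < n) (hab : a < b) (hh : SinhDistortionBound c n (Ioo a b) h) :
    0 ≤ oneSidedSlope c n a b h := by
  have := hh.nonneg hn.ne' (show (a + b) / 2 ∈ Ioo a b from ⟨by linarith, by linarith⟩)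
  have := one_le_harnackConst c (b - a) hn.le
  have : 0 < b - a := by linarith
  unfold oneSidedSlope
  positivity

/- Extending `h` by zero keeps the one-sided bound up to the endpoints `a` and `b`, because
`h ≥ 0`. -/
lemma indicator_sub_indicator_le (hc : 0 < c) (hn : 0 < n) (hab : a < b)
    (hh : SinhDistortionBound c n (Ioo a b) h) {x₀ z : ℝ} (hz : z ∈ uIcc x₀ ((a + b) / 2)) :
    (Ioo a b).indicator h x₀ - (Ioo a b).indicator h z ≤ oneSidedSlope c n a b h * |z - x₀| := by
  have hm : (a + b) / 2 ∈ Ioo a b := ⟨by linarith, by linarith⟩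
  have hK := hh.oneSidedSlope_nonneg hn hab
  by_cases hx : x₀ ∈ Ioo a b
  · have hzI : z ∈ Ioo a b := ordConnected_Ioo.uIcc_subset hx hm hz
    obtain ⟨x₁, hx₁, hzx₁, hfar⟩ := exists_far_of_mem_uIcc_midpoint hx hz
    rw [indicator_of_mem hx, indicator_of_mem hzI]
    calc h x₀ - h z ≤ 4 * max n 1 * cosh (c * (b - a)) / (b - a) * |z - x₀| * h x₀ :=
          hh.sub_le_mul_abs_sub_mul hc hn hx hx₁ hzx₁ hfar
      _ ≤ 4 * max n 1 * cosh (c * (b - a)) / (b - a) * |z - x₀| *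
          (harnackConst c n (b - a) * h ((a + b) / 2)) := by
          have : 0 < b - a := by linarith
          gcongr
          exact hh.le_harnackConst_mul_midpoint hc hn hx
      _ = oneSidedSlope c n a b h * |z - x₀| := by unfold oneSidedSlope; ring
  · rw [indicator_of_notMem hx, zero_sub]
    exact (neg_nonpos.2 (indicator_nonneg (fun y hy => hh.nonneg hn.ne' hy) z)).trans
      (mul_nonneg hK (abs_nonneg _))

lemma monotoneOn_indicator_add_mul (hc : 0 < c) (hn : 0 < n) (hab : a < b)
    (hh : SinhDistortionBound c n (Ioo a b) h) :
    MonotoneOn (fun x => (Ioo a b).indicator h x + oneSidedSlope c n a b h * x)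
      (Icc a ((a + b) / 2)) := by
  intro x hx y hy hxy
  have hy' : y ∈ uIcc x ((a + b) / 2) := by
    rw [uIcc_of_le (hxy.trans hy.2)]
    exact ⟨hxy, hy.2⟩
  have := hh.indicator_sub_indicator_le hc hn hab hy'
  rw [abs_of_nonneg (sub_nonneg.2 hxy)] at this
  dsimp only
  linarith

lemma monotoneOn_neg_indicator_add_mul (hc : 0 < c) (hn : 0 < n) (hab : a < b)
    (hh : SinhDistortionBound c n (Ioo a b) h) :
    MonotoneOn (fun x => -(Ioo a b).indicator h x + oneSidedSlope c n a b h * x)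
      (Icc ((a + b) / 2) b) := by
  intro x hx y hy hxy
  have hx' : x ∈ uIcc y ((a + b) / 2) := by
    rw [uIcc_of_ge (hx.1.trans hxy)]
    exact ⟨hx.1, hxy⟩
  have := hh.indicator_sub_indicator_le hc hn hab hx'
  rw [abs_of_nonpos (sub_nonpos.2 hxy)] at this
  dsimp only
  linarith

theorem ae_differentiableAt (hc : 0 < c) (hn : 0 < n) (hab : a < b)
    (hh : SinhDistortionBound c n (Ioo a b) h) :
    ∀ᵐ x ∂volume.restrict (Ioo a b), DifferentiableAt ℝ h x := by
  rw [ae_restrict_iff' measurableSet_Ioo]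
  filter_upwards [ae_differentiableAt_of_monotoneOn_add_mul
      (hh.monotoneOn_indicator_add_mul hc hn hab),
    ae_differentiableAt_of_monotoneOn_add_mul (hh.monotoneOn_neg_indicator_add_mul hc hn hab),
    Measure.ae_ne volume ((a + b) / 2)] with x hleft hright hxm hx
  rw [← (eventuallyEq_of_mem (Ioo_mem_nhds hx.1 hx.2) eqOn_indicator).differentiableAt_iff]
  rcases hxm.lt_or_gt with hlt | hgt
  · exact hleft ⟨hx.1, hlt⟩
  · exact differentiableAt_neg_iff.1 (hright ⟨hgt, hx.2⟩)

theorem integrableOn (hc : 0 < c) (hn : 0 < n) (hab : a < b)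
    (hh : SinhDistortionBound c n (Ioo a b) h) : IntegrableOn h (Ioo a b) := by
  have hm : (a + b) / 2 ∈ Icc a b := ⟨by linarith, by linarith⟩
  have hg : AEMeasurable ((Ioo a b).indicator h) (volume.restrict (Icc a b)) := by
    rw [← Icc_union_Icc_eq_Icc hm.1 hm.2, aemeasurable_union_iff]
    exact ⟨aemeasurable_of_monotoneOn_add_mul (hh.monotoneOn_indicator_add_mul hc hn hab),
      by simpa [Pi.neg_def] using (aemeasurable_of_monotoneOn_add_mul
        (hh.monotoneOn_neg_indicator_add_mul hc hn hab)).neg⟩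
  have hmeas : AEMeasurable h (volume.restrict (Ioo a b)) :=
    (hg.mono_measure (Measure.restrict_mono Ioo_subset_Icc_self le_rfl)).congr
      ((ae_restrict_iff' measurableSet_Ioo).2
        (Eventually.of_forall fun x hx => indicator_of_mem hx h))
  refine Integrable.of_bound hmeas.aestronglyMeasurable
    (harnackConst c n (b - a) * h ((a + b) / 2)) ?_
  filter_upwards [ae_restrict_mem measurableSet_Ioo] with x hx
  rw [Real.norm_eq_abs, abs_of_nonneg (hh.nonneg hn.ne' hx)]
  exact hh.le_harnackConst_mul_midpoint hc hn hx

theorem integral_abs_deriv_le (hc : 0 < c) (hn : 0 < n) (hab : a < b)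
    (hh : SinhDistortionBound c n (Ioo a b) h) :
    ∫ x in Ioo a b, |deriv h x| ≤
      2 * (1 + 4 * max n 1 * harnackConst c n (b - a) * cosh (c * (b - a))) * h ((a + b) / 2) := by
  set g := (Ioo a b).indicator h
  have hK := hh.oneSidedSlope_nonneg hn hab
  have ham : a ≤ (a + b) / 2 := by linarith
  have hmb : (a + b) / 2 ≤ b := by linarith
  have hleft := hh.monotoneOn_indicator_add_mul hc hn hab
  have hright := hh.monotoneOn_neg_indicator_add_mul hc hn hab
  have hneg : (fun x => |deriv (fun y => -g y) x|) = fun x => |deriv g x| := by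
    funext x
    rw [deriv.fun_neg, abs_neg]
  have hint₂ := intervalIntegrable_abs_deriv_of_monotoneOn_add_mul hK hmb hright
  have hvar₂ := integral_abs_deriv_le_of_monotoneOn_add_mul hK hmb hright
  rw [hneg] at hint₂ hvar₂
  have hderiv : ∫ x in Ioo a b, |deriv h x| = ∫ x in a..b, |deriv g x| := by
    rw [intervalIntegral.integral_of_le hab.le, integral_Ioc_eq_integral_Ioo]
    refine setIntegral_congr_fun measurableSet_Ioo fun x hx => ?_
    rw [(eventuallyEq_of_mem (Ioo_mem_nhds hx.1 hx.2) eqOn_indicator).deriv_eq]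
  rw [hderiv, ← intervalIntegral.integral_add_adjacent_intervals
    (intervalIntegrable_abs_deriv_of_monotoneOn_add_mul hK ham hleft) hint₂]
  have hvar₁ := integral_abs_deriv_le_of_monotoneOn_add_mul hK ham hleft
  have hga : g a = 0 := indicator_of_notMem (fun hx => hx.1.false) h
  have hgb : g b = 0 := indicator_of_notMem (fun hx => hx.2.false) h
  have hgm : g ((a + b) / 2) = h ((a + b) / 2) :=
    indicator_of_mem (show (a + b) / 2 ∈ Ioo a b from ⟨by linarith, by linarith⟩) h
  have hKL : 2 * oneSidedSlope c n a b h * (b - a) =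
      8 * max n 1 * harnackConst c n (b - a) * cosh (c * (b - a)) * h ((a + b) / 2) := by
    have : b - a ≠ 0 := by linarith
    unfold oneSidedSlope
    field_simp
    ring
  linarith

theorem midpoint_le_integral (hc : 0 < c) (hn : 0 < n) (hab : a < b)
    (hh : SinhDistortionBound c n (Ioo a b) h) :
    (b - a) / 8 * h ((a + b) / 2) ≤ harnackConst c n (b - a) * ∫ x in Ioo a b, h x := by
  set J := Ioo ((a + b) / 2) ((a + b) / 2 + (b - a) / 8)
  have hJ : J ⊆ Ioo a b := Ioo_subset_Ioo (by linarith) (by linarith)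
  have hlow : ∀ y ∈ J, h ((a + b) / 2) ≤ harnackConst c n (b - a) * h y := fun y hy =>
    hh.le_harnackConst_mul hc hn (x₁ := (a + b) / 2 + 3 * (b - a) / 8)
      ⟨by linarith, by linarith⟩ ⟨by linarith, by linarith⟩
      (by rw [uIcc_of_le (by linarith)]; exact ⟨hy.1.le, by linarith [hy.2]⟩)
      (by rw [abs_of_nonneg (by linarith [hy.2])]; linarith [hy.2])
  have hint := hh.integrableOn hc hn hab
  have hΛ := one_le_harnackConst c (b - a) hn.le
  calc (b - a) / 8 * h ((a + b) / 2) = ∫ _ in J, h ((a + b) / 2) := by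
        rw [setIntegral_const, Real.volume_real_Ioo_of_le (by linarith), smul_eq_mul]
        ring
    _ ≤ ∫ y in J, harnackConst c n (b - a) * h y :=
        setIntegral_mono_on (integrableOn_const measure_Ioo_lt_top.ne)
          ((hint.mono_set hJ).const_mul _) measurableSet_Ioo hlow
    _ = harnackConst c n (b - a) * ∫ y in J, h y := integral_const_mul _ _
    _ ≤ harnackConst c n (b - a) * ∫ x in Ioo a b, h x :=
        mul_le_mul_of_nonneg_left (setIntegral_mono_set hint
          ((ae_restrict_iff' measurableSet_Ioo).2 (Eventually.of_forall fun x hx =>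
            hh.nonneg hn.ne' hx)) hJ.eventuallyLE) (by linarith)

theorem integral_abs_deriv_le_variationConst_mul (hc : 0 < c) (hn : 0 < n) (hab : a < b)
    (hh : SinhDistortionBound c n (Ioo a b) h) :
    ∫ x in Ioo a b, |deriv h x| ≤
      1 / (b - a) * variationConst c n (b - a) * ∫ x in Ioo a b, h x := by
  set A := 1 + 4 * max n 1 * harnackConst c n (b - a) * cosh (c * (b - a))
  have hA : 0 ≤ A := by
    have := one_le_harnackConst c (b - a) hn.le
    positivity
  have hL : 0 < b - a := by linarith
  calc ∫ x in Ioo a b, |deriv h x| ≤ 2 * A * h ((a + b) / 2) :=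
        hh.integral_abs_deriv_le hc hn hab
    _ = 16 * A / (b - a) * ((b - a) / 8 * h ((a + b) / 2)) := by field_simp; ring
    _ ≤ 16 * A / (b - a) * (harnackConst c n (b - a) * ∫ x in Ioo a b, h x) :=
        mul_le_mul_of_nonneg_left (hh.midpoint_le_integral hc hn hab) (by positivity)
    _ = 1 / (b - a) * variationConst c n (b - a) * ∫ x in Ioo a b, h x := by
        unfold variationConst
        ring

end SinhDistortionBound

/-- First-order integral a priori estimate for `MCP(κ,N)` densities (`κ < 0`):
there is a nondecreasing positive function `C` on `(0,∞)` blowing up at infinity such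
that the total variation of any such density on a bounded open interval is controlled
by its integral.  Here `deriv h` is the derivative of `h`, which in Lean is `0` by
convention at points of non-differentiability. -/
theorem mcp_neg_density_first_order_bound (κ N : ℝ) (hκ : κ < 0) (hN : 1 < N) :
    ∃ C : ℝ → ℝ, (∀ r : ℝ, 0 < r → 0 < C r) ∧ MonotoneOn C (Set.Ioi 0) ∧
      Filter.Tendsto C Filter.atTop Filter.atTop ∧
      ∀ (a b : ℝ) (h : ℝ → ℝ), a < b → IsMCPNegDensity κ N (Set.Ioo a b) h →
        (∀ᵐ x ∂(volume.restrict (Set.Ioo a b)), DifferentiableAt ℝ h x) ∧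
        ∫ x in Set.Ioo a b, |deriv h x| ≤
          (1 / (b - a)) * C (b - a) * ∫ x in Set.Ioo a b, h x := by
  have hn : 0 < N - 1 := by linarith
  have hc : 0 < √(-κ / (N - 1)) := sqrt_pos.2 (div_pos (neg_pos.2 hκ) hn)
  refine ⟨variationConst (√(-κ / (N - 1))) (N - 1), fun r _ => variationConst_pos _ hn.le r,
    (variationConst_monotoneOn hc.le hn.le).mono Ioi_subset_Ici_self,
    tendsto_variationConst hc hn.le, fun a b h hab hmcp => ?_⟩
  have hh := hmcp.sinhDistortionBound hN ordConnected_Ioo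
  exact ⟨hh.ae_differentiableAt hc hn hab, hh.integral_abs_deriv_le_variationConst_mul hc hn hab⟩
end

section
/- Let κ < 0 and N > 1 be real, let I be an open real interval, and let h : I → ℝ be positive and twice continuously differentiable on I. Then h is a CD(κ,N) density on I if and only if for every x ∈ I one has (log h)''(x) + (1/(N−1))·((log h)'(x))² ≤ −κ. -/
open Set

/-- A `CD(κ,N)` density on the set `I ⊆ ℝ`, for a constant negative curvature
parameter `κ`, with the explicit hyperbolic distortion coefficients. -/
def IsCDNegDensity (κ N : ℝ) (I : Set ℝ) (h : ℝ → ℝ) : Prop :=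
  (∀ x ∈ I, 0 ≤ h x) ∧
    ∀ x₀ ∈ I, ∀ x₁ ∈ I, x₀ ≠ x₁ → ∀ t ∈ Set.Icc (0 : ℝ) 1,
      Real.sinh (Real.sqrt (-κ / (N - 1)) * ((1 - t) * |x₁ - x₀|)) /
            Real.sinh (Real.sqrt (-κ / (N - 1)) * |x₁ - x₀|) * h x₀ ^ (1 / (N - 1)) +
          Real.sinh (Real.sqrt (-κ / (N - 1)) * (t * |x₁ - x₀|)) /
            Real.sinh (Real.sqrt (-κ / (N - 1)) * |x₁ - x₀|) * h x₁ ^ (1 / (N - 1)) ≤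
        h ((1 - t) * x₀ + t * x₁) ^ (1 / (N - 1))

/-!
Put `g = h ^ (1 / (N - 1))` and `L = √(-κ / (N - 1))`. Since
`g'' = g / (N - 1) * ((log h)'' + (log h)'² / (N - 1))`, the differential inequality says
`g'' ≤ L² g`, while the CD inequality says that on every chord `[a, b]` the function `g` lies above
the solution `ψ` of `ψ'' = L² ψ` with the same boundary values.

If `g'' ≤ L² g`, then `w = g - ψ` satisfies `w'' ≤ L² w` and vanishes at `a` and `b`; at a
negative interior minimum we would get `0 ≤ w'' < 0`. Conversely, on the chord `[x - ε, x + ε]`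
at its midpoint the CD inequality says `φ(ε) = 2 cosh(Lε) g(x) - g(x + ε) - g(x - ε) ≥ 0 = φ(0)`,
so `0` is a local minimum of `φ` and `0 ≤ φ''(0) = 2 (L² g(x) - g''(x))`.
-/

open Filter Topology Real

theorem IsLocalMin.deriv2_nonneg_of_hasDerivAt {f f' : ℝ → ℝ} {c f'' : ℝ}
    (hmin : IsLocalMin f c) (hf : ∀ᶠ y in 𝓝 c, HasDerivAt f (f' y) y)
    (hf' : HasDerivAt f' f'' c) : 0 ≤ f'' := by
  by_contra! hneg
  have hc : f' c = 0 := hmin.hasDerivAt_eq_zero hf.self_of_nhds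
  have hf'_neg : ∀ᶠ y in 𝓝[>] c, f' y < 0 := by
    filter_upwards [nhdsGT_le_nhdsNE c (hf'.tendsto_slope.eventually (gt_mem_nhds hneg)),
      self_mem_nhdsWithin] with y hy (hcy : c < y)
    rw [slope_def_field, hc, sub_zero] at hy
    exact ((div_neg_iff.1 hy).resolve_left fun h => h.2.not_gt (sub_pos.2 hcy)).1
  obtain ⟨u, hcu : c < u, hu⟩ := mem_nhdsGT_iff_exists_Ioo_subset.1
    (((hf.and hmin).filter_mono nhdsWithin_le_nhds).and hf'_neg)
  have hy : (c + u) / 2 ∈ Ioo c u := ⟨by linarith, by linarith⟩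
  have hcont : ContinuousOn f (Icc c ((c + u) / 2)) := by
    intro x hx
    rcases hx.1.eq_or_lt with rfl | hcx
    · exact hf.self_of_nhds.continuousAt.continuousWithinAt
    · exact (hu ⟨hcx, hx.2.trans_lt hy.2⟩).1.1.continuousAt.continuousWithinAt
  obtain ⟨ξ, hξ, hslope⟩ := exists_hasDerivAt_eq_slope f f' hy.1 hcont
    fun x hx => (hu ⟨hx.1, hx.2.trans hy.2⟩).1.1
  have hξ_neg : f' ξ < 0 := (hu ⟨hξ.1, hξ.2.trans hy.2⟩).2
  have hmin_y : f c ≤ f ((c + u) / 2) := (hu hy).1.2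
  rw [hslope] at hξ_neg
  exact hξ_neg.not_ge (div_nonneg (sub_nonneg.2 hmin_y) (sub_nonneg.2 hy.1.le))

theorem nonneg_on_Icc_of_deriv2_le_mul {w w' w'' : ℝ → ℝ} {a b k : ℝ} (hk : 0 < k)
    (hw : ∀ x ∈ Icc a b, HasDerivAt w (w' x) x) (hw' : ∀ x ∈ Icc a b, HasDerivAt w' (w'' x) x)
    (hle : ∀ x ∈ Icc a b, w'' x ≤ k * w x) (ha : 0 ≤ w a) (hb : 0 ≤ w b) :
    ∀ x ∈ Icc a b, 0 ≤ w x := by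
  intro x hx
  obtain ⟨c, hc, hmin⟩ := isCompact_Icc.exists_isMinOn ⟨x, hx⟩
    fun y hy => (hw y hy).continuousAt.continuousWithinAt
  refine le_trans ?_ (hmin hx)
  by_contra! hneg
  have hac : a < c := hc.1.lt_of_ne (by rintro rfl; linarith)
  have hcb : c < b := hc.2.lt_of_ne (by rintro rfl; linarith)
  have hnhds : Icc a b ∈ 𝓝 c := Icc_mem_nhds hac hcb
  have h2 := (hmin.isLocalMin hnhds).deriv2_nonneg_of_hasDerivAt
    (eventually_of_mem hnhds hw) (hw' c hc)
  linarith [hle c hc, mul_neg_of_pos_of_neg hk hneg]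

/-- The solution of `ψ'' = L² ψ` on `[a, b]` with `ψ a = p` and `ψ b = q`. -/
noncomputable def sinhInterpolant (L a b p q y : ℝ) : ℝ :=
  (sinh (L * (b - y)) * p + sinh (L * (y - a)) * q) / sinh (L * (b - a))

theorem sinhInterpolant_left {L a b p q : ℝ} (h : sinh (L * (b - a)) ≠ 0) :
    sinhInterpolant L a b p q a = p := by
  simp [sinhInterpolant, h]

theorem sinhInterpolant_right {L a b p q : ℝ} (h : sinh (L * (b - a)) ≠ 0) :
    sinhInterpolant L a b p q b = q := by
  simp [sinhInterpolant, h]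

theorem sinhInterpolant_one_sub_mul_add_mul (L a b p q t : ℝ) :
    sinhInterpolant L a b p q ((1 - t) * a + t * b) =
      sinh (L * ((1 - t) * (b - a))) / sinh (L * (b - a)) * p +
        sinh (L * (t * (b - a))) / sinh (L * (b - a)) * q := by
  rw [sinhInterpolant, show b - ((1 - t) * a + t * b) = (1 - t) * (b - a) by ring,
    show (1 - t) * a + t * b - a = t * (b - a) by ring]
  ring

theorem exists_hasDerivAt_sinhInterpolant (L a b p q : ℝ) :
    ∃ ψ' : ℝ → ℝ, (∀ y, HasDerivAt (sinhInterpolant L a b p q) (ψ' y) y) ∧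
      ∀ y, HasDerivAt ψ' (L ^ 2 * sinhInterpolant L a b p q y) y := by
  have hb : ∀ y, HasDerivAt (fun y => L * (b - y)) (-L) y := fun y => by
    simpa using ((hasDerivAt_id y).const_sub b).const_mul L
  have ha : ∀ y, HasDerivAt (fun y => L * (y - a)) L y := fun y => by
    simpa using ((hasDerivAt_id y).sub_const a).const_mul L
  refine ⟨fun y => (cosh (L * (b - y)) * -L * p + cosh (L * (y - a)) * L * q) / sinh (L * (b - a)),
    fun y => (((hb y).sinh.mul_const p).add ((ha y).sinh.mul_const q)).div_const _, fun y => ?_⟩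
  refine ((((hb y).cosh.mul_const (-L)).mul_const p).add
    (((ha y).cosh.mul_const L).mul_const q)).div_const (sinh (L * (b - a))) |>.congr_deriv ?_
  unfold sinhInterpolant
  ring

theorem sinhInterpolant_le_of_deriv2_le {g g' g'' : ℝ → ℝ} {L a b : ℝ} (hL : L ≠ 0) (hab : a < b)
    (hg : ∀ x ∈ Icc a b, HasDerivAt g (g' x) x) (hg' : ∀ x ∈ Icc a b, HasDerivAt g' (g'' x) x)
    (hle : ∀ x ∈ Icc a b, g'' x ≤ L ^ 2 * g x) :
    ∀ y ∈ Icc a b, sinhInterpolant L a b (g a) (g b) y ≤ g y := by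
  obtain ⟨ψ', hψ, hψ'⟩ := exists_hasDerivAt_sinhInterpolant L a b (g a) (g b)
  have hS : sinh (L * (b - a)) ≠ 0 := sinh_ne_zero.2 (mul_ne_zero hL (sub_pos.2 hab).ne')
  have hw := nonneg_on_Icc_of_deriv2_le_mul
    (w := fun x => g x - sinhInterpolant L a b (g a) (g b) x) (pow_two_pos_of_ne_zero hL)
    (fun x hx => (hg x hx).sub (hψ x)) (fun x hx => (hg' x hx).sub (hψ' x))
    (fun x hx => by rw [mul_sub]; linarith [hle x hx])
    (by simp [sinhInterpolant_left hS]) (by simp [sinhInterpolant_right hS])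
  exact fun y hy => sub_nonneg.1 (hw y hy)

theorem deriv2_le_of_add_le_two_cosh_mul {g g' : ℝ → ℝ} {L x g'' : ℝ}
    (hg : ∀ᶠ y in 𝓝 x, HasDerivAt g (g' y) y) (hg' : HasDerivAt g' g'' x)
    (hle : ∀ᶠ ε in 𝓝 0, g (x - ε) + g (x + ε) ≤ 2 * cosh (L * ε) * g x) :
    g'' ≤ L ^ 2 * g x := by
  set φ : ℝ → ℝ := fun ε => 2 * cosh (L * ε) * g x - g (x + ε) - g (x - ε)
  have hmin : IsLocalMin φ 0 := by
    filter_upwards [hle] with ε hε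
    simp only [φ, mul_zero, cosh_zero, add_zero, sub_zero]
    linarith
  have hLε : ∀ ε, HasDerivAt (fun ε => L * ε) L ε := fun ε => by
    simpa using (hasDerivAt_id ε).const_mul L
  have hφ : ∀ᶠ ε in 𝓝 0,
      HasDerivAt φ (2 * (sinh (L * ε) * L) * g x - g' (x + ε) - -g' (x - ε)) ε := by
    filter_upwards [((continuous_const_add x).tendsto' 0 x (add_zero x)).eventually hg,
      ((continuous_sub_left x).tendsto' 0 x (sub_zero x)).eventually hg] with ε hgp hgm
    exact ((((hLε ε).cosh.const_mul 2).mul_const (g x)).sub (hgp.comp_const_add x ε)).sub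
      (hgm.comp_const_sub x ε)
  have hp : HasDerivAt (fun ε => g' (x + ε)) g'' 0 :=
    HasDerivAt.comp_const_add x 0 (by simpa using hg')
  have hm : HasDerivAt (fun ε => g' (x - ε)) (-g'') 0 :=
    HasDerivAt.comp_const_sub x 0 (by simpa using hg')
  have hφ' := (((((hLε 0).sinh.mul_const L).const_mul 2).mul_const (g x)).sub hp).sub hm.neg
  have := hmin.deriv2_nonneg_of_hasDerivAt hφ hφ'
  simp only [mul_zero, cosh_zero, one_mul, neg_neg] at this
  linarith

/-- The chord inequality of `IsCDNegDensity`, read for `g = h ^ (1 / (N - 1))` and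
`L = √(-κ / (N - 1))`. -/
def SinhConcaveOn (L : ℝ) (I : Set ℝ) (g : ℝ → ℝ) : Prop :=
  ∀ x₀ ∈ I, ∀ x₁ ∈ I, x₀ ≠ x₁ → ∀ t ∈ Icc (0 : ℝ) 1,
    sinh (L * ((1 - t) * |x₁ - x₀|)) / sinh (L * |x₁ - x₀|) * g x₀ +
        sinh (L * (t * |x₁ - x₀|)) / sinh (L * |x₁ - x₀|) * g x₁ ≤
      g ((1 - t) * x₀ + t * x₁)

theorem sinhConcaveOn_of_sinhInterpolant_le {L : ℝ} {I : Set ℝ} {g : ℝ → ℝ}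
    (h : ∀ a ∈ I, ∀ b ∈ I, a < b → ∀ y ∈ Icc a b, sinhInterpolant L a b (g a) (g b) y ≤ g y) :
    SinhConcaveOn L I g := by
  intro x₀ hx₀ x₁ hx₁ hne t ht
  have hmem : ∀ {a b : ℝ}, a ≤ b → ∀ s ∈ Icc (0 : ℝ) 1, (1 - s) * a + s * b ∈ Icc a b :=
    fun hab s hs => ⟨by nlinarith [hs.1], by nlinarith [hs.2]⟩
  rcases hne.lt_or_gt with hlt | hgt
  · rw [abs_of_pos (sub_pos.2 hlt), ← sinhInterpolant_one_sub_mul_add_mul]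
    exact h x₀ hx₀ x₁ hx₁ hlt _ (hmem hlt.le t ht)
  · have ht' : 1 - t ∈ Icc (0 : ℝ) 1 := ⟨sub_nonneg.2 ht.2, sub_le_self 1 ht.1⟩
    have := h x₁ hx₁ x₀ hx₀ hgt _ (hmem hgt.le (1 - t) ht')
    rw [sinhInterpolant_one_sub_mul_add_mul, sub_sub_cancel] at this
    rw [abs_sub_comm, abs_of_pos (sub_pos.2 hgt), add_comm,
      show (1 - t) * x₀ + t * x₁ = t * x₁ + (1 - t) * x₀ by ring]
    exact this

theorem SinhConcaveOn.add_le_two_cosh_mul {L : ℝ} {I : Set ℝ} {g : ℝ → ℝ}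
    (hg : SinhConcaveOn L I g) (hL : L ≠ 0) {x ε : ℝ} (hε : ε ≠ 0) (hm : x - ε ∈ I)
    (hp : x + ε ∈ I) : g (x - ε) + g (x + ε) ≤ 2 * cosh (L * ε) * g x := by
  have h := hg (x - ε) hm (x + ε) hp (fun h => hε (by linarith)) (1 / 2) ⟨by norm_num, by norm_num⟩
  have hs : sinh (L * |ε|) ≠ 0 := sinh_ne_zero.2 (mul_ne_zero hL (abs_ne_zero.2 hε))
  have hc : cosh (L * |ε|) = cosh (L * ε) := by
    rcases abs_choice ε with hε' | hε' <;> simp [hε']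
  rw [show x + ε - (x - ε) = 2 * ε by ring, abs_mul, abs_two,
    show (1 - 1 / 2) * (2 * |ε|) = |ε| by ring, show 1 / 2 * (2 * |ε|) = |ε| by ring,
    show (1 - 1 / 2) * (x - ε) + 1 / 2 * (x + ε) = x by ring,
    show L * (2 * |ε|) = 2 * (L * |ε|) by ring, sinh_two_mul,
    show sinh (L * |ε|) / (2 * sinh (L * |ε|) * cosh (L * |ε|)) = (2 * cosh (L * |ε|))⁻¹ by
      field_simp, ← mul_add, inv_mul_le_iff₀ (by positivity), hc] at h
  exact h

theorem sinhConcaveOn_iff_deriv2_le {L : ℝ} {I : Set ℝ} {g g' g'' : ℝ → ℝ} (hL : L ≠ 0)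
    (hI : IsOpen I) (hI' : I.OrdConnected)
    (hg : ∀ x ∈ I, HasDerivAt g (g' x) x) (hg' : ∀ x ∈ I, HasDerivAt g' (g'' x) x) :
    SinhConcaveOn L I g ↔ ∀ x ∈ I, g'' x ≤ L ^ 2 * g x := by
  refine ⟨fun hcd x hx => ?_, fun hle => sinhConcaveOn_of_sinhInterpolant_le
    fun a ha b hb hab => ?_⟩
  · refine deriv2_le_of_add_le_two_cosh_mul (eventually_of_mem (hI.mem_nhds hx) hg) (hg' x hx) ?_
    filter_upwards [((continuous_sub_left x).tendsto' 0 x (sub_zero x)).eventually (hI.mem_nhds hx),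
      ((continuous_const_add x).tendsto' 0 x (add_zero x)).eventually (hI.mem_nhds hx)]
      with ε hmε hpε
    rcases eq_or_ne ε 0 with rfl | hε
    · simp only [sub_zero, add_zero, mul_zero, cosh_zero, mul_one]
      linarith
    · exact hcd.add_le_two_cosh_mul hL hε hmε hpε
  · have hab' : Icc a b ⊆ I := hI'.out ha hb
    exact sinhInterpolant_le_of_deriv2_le hL hab (fun x hx => hg x (hab' hx))
      (fun x hx => hg' x (hab' hx)) fun x hx => hle x (hab' hx)

theorem hasDerivAt_rpow_const_of_log {h : ℝ → ℝ} {s : Set ℝ} {x c d : ℝ}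
    (hd : HasDerivAt (fun y => log (h y)) d x) (hs : s ∈ 𝓝 x) (hpos : ∀ y ∈ s, 0 < h y) :
    HasDerivAt (fun y => h y ^ c) (c * d * h x ^ c) x := by
  refine ((hd.const_mul c).exp.congr_of_eventuallyEq ?_).congr_deriv ?_
  · filter_upwards [hs] with y hy
    rw [rpow_def_of_pos (hpos y hy), mul_comm]
  · rw [rpow_def_of_pos (hpos x (mem_of_mem_nhds hs)), mul_comm (log _)]
    ring

/-- Differential characterization of `CD(κ,N)` densities (`κ < 0`): a positive, twice
continuously differentiable function on an open interval `I` is a `CD(κ,N)` density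
iff `(log h)'' + (log h)'^2/(N-1) ≤ -κ` on `I`. -/
theorem cd_neg_density_differential_characterization (κ N : ℝ) (I : Set ℝ) (h : ℝ → ℝ)
    (hκ : κ < 0) (hN : 1 < N) (hI : IsOpen I) (hI' : I.OrdConnected)
    (hpos : ∀ x ∈ I, 0 < h x) (hreg : ContDiffOn ℝ 2 h I) :
    IsCDNegDensity κ N I h ↔
      ∀ x ∈ I, deriv (deriv (fun y => Real.log (h y))) x +
        (1 / (N - 1)) * (deriv (fun y => Real.log (h y)) x) ^ 2 ≤ -κ := by
  have hc : 0 < 1 / (N - 1) := one_div_pos.2 (sub_pos.2 hN)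
  have hκc : 0 < -κ / (N - 1) := div_pos (neg_pos.2 hκ) (sub_pos.2 hN)
  have hL : sqrt (-κ / (N - 1)) ^ 2 = -κ * (1 / (N - 1)) := by
    rw [sq_sqrt hκc.le, mul_one_div]
  set c := 1 / (N - 1)
  set u := fun y => log (h y)
  have hu : ContDiffOn ℝ 2 u I := hreg.log fun x hx => (hpos x hx).ne'
  have hu₁ : ∀ x ∈ I, HasDerivAt u (deriv u x) x := fun x hx =>
    ((hu.differentiableOn (by norm_num)).differentiableAt (hI.mem_nhds hx)).hasDerivAt
  have hu₂ : ∀ x ∈ I, HasDerivAt (deriv u) (deriv (deriv u) x) x := fun x hx =>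
    (((hu.deriv_of_isOpen (m := 1) hI (by norm_num)).differentiableOn
      (by norm_num)).differentiableAt (hI.mem_nhds hx)).hasDerivAt
  have hg : ∀ x ∈ I, HasDerivAt (fun y => h y ^ c) (c * deriv u x * h x ^ c) x := fun x hx =>
    hasDerivAt_rpow_const_of_log (hu₁ x hx) (hI.mem_nhds hx) hpos
  refine (and_iff_right fun x hx => (hpos x hx).le).trans <|
    (sinhConcaveOn_iff_deriv2_le (sqrt_pos.2 hκc).ne' hI hI' hg
      fun x hx => ((hu₂ x hx).const_mul c).mul (hg x hx)).trans <|
    forall₂_congr fun x hx => ?_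
  rw [hL, show c * deriv (deriv u) x * h x ^ c + c * deriv u x * (c * deriv u x * h x ^ c) =
      (deriv (deriv u) x + c * deriv u x ^ 2) * (c * h x ^ c) by ring, mul_assoc]
  exact mul_le_mul_iff_left₀ (mul_pos hc (rpow_pos_of_pos (hpos x hx) c))
end

section
/- Let κ < 0 and N > 1 be real, let I be an open real interval, and let h : ℝ → ℝ be a function. Suppose there exists a family of open subintervals of I whose union equals I such that h is a CD(κ,N) density on each member of the family. Then h is a CD(κ,N) density on I. -/
/-!
With `l = √(-κ / (N - 1))` and `f = h ^ (1 / (N - 1))`, multiplying the `CD(κ,N)` inequality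
for `x < y < z` by `2 e^{lx} e^{ly} e^{lz}` and using
`2 e^{lu} e^{lv} sinh (l (v - u)) = e^{2lv} - e^{2lu}` turns it into the chord inequality for
`e^{lx} f x` as a function of `u = e^{2lx}`. So being a `CD(κ,N)` density is a concavity
condition in a new variable, and concavity is local: it glues across two overlapping intervals,
hence along a chain of overlapping short intervals covering `[x, z]`, whose existence is given
by a Lebesgue number of the cover.
-/

open Set

open Real Metric

/-- For `x < z`: the point `(ψ y, g y)` lies on or above the chord from `(ψ x, g x)` to
`(ψ z, g z)`. -/
def ChordBelow (ψ g : ℝ → ℝ) (x y z : ℝ) : Prop :=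
  (ψ z - ψ y) * g x + (ψ y - ψ x) * g z ≤ (ψ z - ψ x) * g y

/-- `g ∘ ψ⁻¹` is concave on `ψ '' s`; as in the `CD` condition, the middle point need not lie
in `s`. -/
def IsConcaveWrt (ψ g : ℝ → ℝ) (s : Set ℝ) : Prop :=
  ∀ ⦃x⦄, x ∈ s → ∀ ⦃z⦄, z ∈ s → ∀ ⦃y⦄, x < y → y < z → ChordBelow ψ g x y z

section ChordBelow

variable {ψ g : ℝ → ℝ} {p q r s : ℝ}

theorem ChordBelow.extend_right (hψ : StrictMono ψ) (hpq : p < q) (hqr : q < r) (hrs : r < s)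
    (h₁ : ChordBelow ψ g p q r) (h₂ : ChordBelow ψ g q r s) : ChordBelow ψ g p q s := by
  have hpq := hψ hpq; have hqr := hψ hqr; have hrs := hψ hrs
  unfold ChordBelow at *
  nlinarith [mul_le_mul_of_nonneg_left h₁ (by linarith : (0 : ℝ) ≤ ψ s - ψ q),
    mul_le_mul_of_nonneg_left h₂ (by linarith : (0 : ℝ) ≤ ψ q - ψ p)]

theorem ChordBelow.extend_left (hψ : StrictMono ψ) (hpq : p < q) (hqr : q < r) (hrs : r < s)
    (h₁ : ChordBelow ψ g p q r) (h₂ : ChordBelow ψ g q r s) : ChordBelow ψ g p r s := by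
  have hpq := hψ hpq; have hqr := hψ hqr; have hrs := hψ hrs
  unfold ChordBelow at *
  nlinarith [mul_le_mul_of_nonneg_left h₁ (by linarith : (0 : ℝ) ≤ ψ s - ψ r),
    mul_le_mul_of_nonneg_left h₂ (by linarith : (0 : ℝ) ≤ ψ r - ψ p)]

end ChordBelow

section IsConcaveWrt

variable {ψ g : ℝ → ℝ}

theorem IsConcaveWrt.mono {s t : Set ℝ} (h : IsConcaveWrt ψ g s) (hts : t ⊆ s) :
    IsConcaveWrt ψ g t :=
  fun _ hx _ hz _ hxy hyz => h (hts hx) (hts hz) hxy hyz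

theorem IsConcaveWrt.chordBelow_of_le {s : Set ℝ} (h : IsConcaveWrt ψ g s) {x y z : ℝ}
    (hx : x ∈ s) (hz : z ∈ s) (hxy : x ≤ y) (hyz : y ≤ z) : ChordBelow ψ g x y z := by
  rcases hxy.eq_or_lt with rfl | hxy
  · simp [ChordBelow]
  rcases hyz.eq_or_lt with rfl | hyz
  · simp [ChordBelow]
  exact h hx hz hxy hyz

theorem IsConcaveWrt.union_Icc (hψ : StrictMono ψ) {a b c d : ℝ} (hbc : b < c)
    (h₁ : IsConcaveWrt ψ g (Icc a c)) (h₂ : IsConcaveWrt ψ g (Icc b d)) :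
    IsConcaveWrt ψ g (Icc a d) := by
  rintro x ⟨hax, -⟩ z ⟨-, hzd⟩ y hxy hyz
  by_cases hzc : z ≤ c
  · exact h₁ ⟨hax, by linarith⟩ ⟨by linarith, hzc⟩ hxy hyz
  by_cases hbx : b ≤ x
  · exact h₂ ⟨hbx, by linarith⟩ ⟨by linarith, hzd⟩ hxy hyz
  push Not at hzc hbx
  have hc₁ : c ∈ Icc a c := ⟨by linarith, le_rfl⟩
  have hb₂ : b ∈ Icc b d := ⟨le_rfl, by linarith⟩
  have hx₁ : x ∈ Icc a c := ⟨hax, by linarith⟩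
  have hz₂ : z ∈ Icc b d := ⟨by linarith, hzd⟩
  rcases lt_or_ge y c with hyc | hcy
  · have hycz : ChordBelow ψ g y c z := by
      rcases le_or_gt b y with hby | hyb
      · exact h₂ ⟨hby, by linarith⟩ hz₂ hyc hzc
      · exact (h₁ ⟨by linarith, by linarith⟩ hc₁ hyb hbc).extend_left hψ hyb hbc hzc
          (h₂ hb₂ hz₂ hbc hzc)
    exact (h₁ hx₁ hc₁ hxy hyc).extend_right hψ hxy hyc hzc hycz
  · have hxby : ChordBelow ψ g x b y := by
      rcases eq_or_lt_of_le hcy with rfl | hcy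
      · exact h₁ hx₁ hc₁ hbx hbc
      · exact (h₁ hx₁ hc₁ hbx hbc).extend_right hψ hbx hbc hcy
          (h₂ hb₂ ⟨by linarith, by linarith⟩ hbc hcy)
    exact hxby.extend_left hψ hbx (by linarith) hyz (h₂ hb₂ hz₂ (by linarith) hyz)

theorem IsConcaveWrt.Icc_of_forall_ball (hψ : StrictMono ψ) {a b δ : ℝ} (hδ : 0 < δ)
    (hloc : ∀ m ∈ Icc a b, IsConcaveWrt ψ g (ball m δ)) : IsConcaveWrt ψ g (Icc a b) := by
  rcases le_or_gt b a with hba | hab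
  · exact fun x hx z hz _ hxy hyz =>
      absurd (hxy.trans hyz) (not_lt.2 (hz.2.trans (hba.trans hx.1)))
  obtain ⟨n, hn⟩ := exists_nat_gt ((b - a) / δ)
  have hn₀ : (0 : ℝ) < n := lt_trans (div_pos (by linarith) hδ) hn
  set ε := (b - a) / n
  have hε : 0 < ε := div_pos (by linarith) hn₀
  have hεδ : ε < δ := by rwa [div_lt_iff₀ hn₀, mul_comm, ← div_lt_iff₀ hδ]
  have hnε : n * ε = b - a := by simp only [ε]; field_simp
  set p : ℕ → ℝ := fun k => a + k * ε
  have hp_succ (k : ℕ) : p (k + 1) = p k + ε := by simp only [p]; push_cast; ring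
  have hp_mem {k : ℕ} (hk : k ≤ n) : p k ∈ Icc a b := by
    have : (k : ℝ) * ε ≤ n * ε := mul_le_mul_of_nonneg_right (by exact_mod_cast hk) hε.le
    exact ⟨le_add_of_nonneg_right (by positivity), by simp only [p]; linarith⟩
  have hstep : ∀ k, k + 1 ≤ n → IsConcaveWrt ψ g (Icc a (p (k + 1))) := by
    intro k
    induction k with
    | zero =>
      intro _
      refine (hloc a ⟨le_rfl, hab.le⟩).mono fun u hu => ?_
      have hp₁ : p 1 = a + ε := by simp only [p]; ring
      rw [Real.ball_eq_Ioo]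
      constructor <;> linarith [hu.1, hu.2]
    | succ k ih =>
      intro hk
      refine IsConcaveWrt.union_Icc hψ (b := p k) (by linarith [hp_succ k]) (ih (by omega))
        ((hloc (p (k + 1)) (hp_mem (by omega))).mono fun u hu => ?_)
      rw [Real.ball_eq_Ioo]
      constructor <;> linarith [hu.1, hu.2, hp_succ k, hp_succ (k + 1)]
  obtain ⟨m, rfl⟩ : ∃ m, n = m + 1 := Nat.exists_eq_succ_of_ne_zero (by exact_mod_cast hn₀.ne')
  have hpn : p (m + 1) = b := by simp only [p]; linarith
  exact hpn ▸ hstep m le_rfl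

theorem IsConcaveWrt.of_isOpen_cover (hψ : StrictMono ψ) {s : Set ℝ} (hs : s.OrdConnected)
    {𝒥 : Set (Set ℝ)} (h𝒥 : ∀ J ∈ 𝒥, IsOpen J) (hcover : s ⊆ ⋃₀ 𝒥)
    (hloc : ∀ J ∈ 𝒥, IsConcaveWrt ψ g J) : IsConcaveWrt ψ g s := by
  intro x hx z hz y hxy hyz
  obtain ⟨δ, hδ, hball⟩ := lebesgue_number_lemma_of_metric_sUnion isCompact_Icc h𝒥
    ((hs.out hx hz).trans hcover)
  have hIcc : IsConcaveWrt ψ g (Icc x z) := IsConcaveWrt.Icc_of_forall_ball hψ hδ fun m hm => by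
    obtain ⟨J, hJ, hmJ⟩ := hball m hm
    exact (hloc J hJ).mono hmJ
  exact hIcc ⟨le_rfl, by linarith⟩ ⟨by linarith, le_rfl⟩ hxy hyz

end IsConcaveWrt

section SinhChord

variable {l : ℝ} {f : ℝ → ℝ}

/-- The `CD` inequality for `f = h ^ (1 / (N - 1))` with `l = √(-κ / (N - 1))`. -/
def SinhChordIneq (l : ℝ) (f : ℝ → ℝ) (x₀ x₁ t : ℝ) : Prop :=
  sinh (l * ((1 - t) * |x₁ - x₀|)) / sinh (l * |x₁ - x₀|) * f x₀ +
      sinh (l * (t * |x₁ - x₀|)) / sinh (l * |x₁ - x₀|) * f x₁ ≤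
    f ((1 - t) * x₀ + t * x₁)

theorem sinhChordIneq_comm {x₀ x₁ t : ℝ} :
    SinhChordIneq l f x₁ x₀ (1 - t) ↔ SinhChordIneq l f x₀ x₁ t := by
  unfold SinhChordIneq
  rw [abs_sub_comm x₀ x₁, sub_sub_cancel, add_comm (_ * f x₁), add_comm (_ * x₁)]

theorem two_mul_exp_mul_exp_mul_sinh (l u v : ℝ) :
    2 * exp (l * u) * exp (l * v) * sinh (l * (v - u)) = exp (2 * l * v) - exp (2 * l * u) := by
  have e₁ : exp (l * u) * exp (l * v) * exp (l * (v - u)) = exp (2 * l * v) := by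
    rw [← exp_add, ← exp_add]; ring_nf
  have e₂ : exp (l * u) * exp (l * v) * exp (-(l * (v - u))) = exp (2 * l * u) := by
    rw [← exp_add, ← exp_add]; ring_nf
  rw [sinh_eq]
  linear_combination e₁ - e₂

theorem sinh_combination_le_iff_chordBelow (l : ℝ) (f : ℝ → ℝ) (x y z : ℝ) :
    sinh (l * (z - y)) * f x + sinh (l * (y - x)) * f z ≤ sinh (l * (z - x)) * f y ↔
      ChordBelow (fun x => exp (2 * l * x)) (fun x => exp (l * x) * f x) x y z := by
  have hc : 0 < 2 * exp (l * x) * exp (l * y) * exp (l * z) := by positivity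
  have hxy := two_mul_exp_mul_exp_mul_sinh l x y
  have hyz := two_mul_exp_mul_exp_mul_sinh l y z
  have hxz := two_mul_exp_mul_exp_mul_sinh l x z
  have hlhs : 2 * exp (l * x) * exp (l * y) * exp (l * z) *
      (sinh (l * (z - y)) * f x + sinh (l * (y - x)) * f z) =
      (exp (2 * l * z) - exp (2 * l * y)) * (exp (l * x) * f x) +
        (exp (2 * l * y) - exp (2 * l * x)) * (exp (l * z) * f z) := by
    linear_combination (exp (l * x) * f x) * hyz + (exp (l * z) * f z) * hxy
  have hrhs : 2 * exp (l * x) * exp (l * y) * exp (l * z) * (sinh (l * (z - x)) * f y) =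
      (exp (2 * l * z) - exp (2 * l * x)) * (exp (l * y) * f y) := by
    linear_combination (exp (l * y) * f y) * hxz
  rw [ChordBelow, ← mul_le_mul_iff_right₀ hc, hlhs, hrhs]

theorem sinhChordIneq_iff_chordBelow (hl : 0 < l) {x₀ x₁ : ℝ} (h : x₀ < x₁) (t : ℝ) :
    SinhChordIneq l f x₀ x₁ t ↔ ChordBelow (fun x => exp (2 * l * x)) (fun x => exp (l * x) * f x)
      x₀ ((1 - t) * x₀ + t * x₁) x₁ := by
  have hs : 0 < sinh (l * (x₁ - x₀)) := sinh_pos_iff.2 (mul_pos hl (sub_pos.2 h))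
  rw [← sinh_combination_le_iff_chordBelow, SinhChordIneq, abs_of_pos (sub_pos.2 h),
    div_mul_eq_mul_div, div_mul_eq_mul_div, ← add_div, div_le_iff₀ hs, mul_comm _ (sinh _)]
  ring_nf

theorem forall_sinhChordIneq_iff_isConcaveWrt (hl : 0 < l) {S : Set ℝ} :
    (∀ x₀ ∈ S, ∀ x₁ ∈ S, x₀ ≠ x₁ → ∀ t ∈ Icc (0 : ℝ) 1, SinhChordIneq l f x₀ x₁ t) ↔
      IsConcaveWrt (fun x => exp (2 * l * x)) (fun x => exp (l * x) * f x) S := by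
  constructor
  · intro H x hx z hz y hxy hyz
    have hxz : 0 < z - x := by linarith
    have ht : (y - x) / (z - x) ∈ Icc (0 : ℝ) 1 :=
      ⟨div_nonneg (by linarith) hxz.le, (div_le_one hxz).2 (by linarith)⟩
    have hy : (1 - (y - x) / (z - x)) * x + (y - x) / (z - x) * z = y := by
      field_simp; ring
    simpa only [hy] using
      (sinhChordIneq_iff_chordBelow hl (hxy.trans hyz) _).1 (H x hx z hz (hxy.trans hyz).ne _ ht)
  · intro H
    suffices key : ∀ x₀ ∈ S, ∀ x₁ ∈ S, x₀ < x₁ → ∀ t ∈ Icc (0 : ℝ) 1,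
        SinhChordIneq l f x₀ x₁ t by
      intro x₀ hx₀ x₁ hx₁ hne t ht
      rcases hne.lt_or_gt with h | h
      · exact key x₀ hx₀ x₁ hx₁ h t ht
      · exact sinhChordIneq_comm.1
          (key x₁ hx₁ x₀ hx₀ h (1 - t) ⟨by linarith [ht.2], by linarith [ht.1]⟩)
    intro x₀ hx₀ x₁ hx₁ h t ⟨ht₀, ht₁⟩
    exact (sinhChordIneq_iff_chordBelow hl h t).2
      (H.chordBelow_of_le hx₀ hx₁ (by nlinarith) (by nlinarith))

end SinhChord

theorem cd_neg_density_local_to_global_general (κ N : ℝ) (I : Set ℝ) (h : ℝ → ℝ)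
    (hκ : κ < 0) (hN : 1 < N) (hI' : I.OrdConnected)
    (𝒥 : Set (Set ℝ))
    (h𝒥 : ∀ J ∈ 𝒥, J ⊆ I ∧ IsOpen J ∧ J.OrdConnected)
    (hcover : ⋃₀ 𝒥 = I)
    (hCD : ∀ J ∈ 𝒥, IsCDNegDensity κ N J h) :
    IsCDNegDensity κ N I h := by
  set l := √(-κ / (N - 1))
  have hl : 0 < l := sqrt_pos.2 (div_pos (by linarith) (by linarith))
  have hψ : StrictMono fun x => exp (2 * l * x) :=
    exp_strictMono.comp (strictMono_mul_left_of_pos (by positivity))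
  refine ⟨fun x hx => ?_, (forall_sinhChordIneq_iff_isConcaveWrt hl).2 ?_⟩
  · obtain ⟨J, hJ, hxJ⟩ := hcover ▸ hx
    exact (hCD J hJ).1 x hxJ
  · exact IsConcaveWrt.of_isOpen_cover hψ hI' (fun J hJ => (h𝒥 J hJ).2.1) hcover.ge
      fun J hJ => (forall_sinhChordIneq_iff_isConcaveWrt hl).1 (hCD J hJ).2

/-- Local-to-global property for one-dimensional `CD(κ,N)` densities (`κ < 0`):
if an open interval `I` is covered by open subintervals on each of which `h` is a
`CD(κ,N)` density, then `h` is a `CD(κ,N)` density on `I`. -/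
theorem cd_neg_density_local_to_global (κ N : ℝ) (I : Set ℝ) (h : ℝ → ℝ)
    (hκ : κ < 0) (hN : 1 < N) (hI : IsOpen I) (hI' : I.OrdConnected)
    (𝒥 : Set (Set ℝ))
    (h𝒥 : ∀ J ∈ 𝒥, J ⊆ I ∧ IsOpen J ∧ J.OrdConnected)
    (hcover : ⋃₀ 𝒥 = I)
    (hCD : ∀ J ∈ 𝒥, IsCDNegDensity κ N J h) :
    IsCDNegDensity κ N I h :=
  cd_neg_density_local_to_global_general κ N I h hκ hN hI' 𝒥 h𝒥 hcover hCD
end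

section
/- Let N > 1 be real and let h be a CD(0,N) density on the compact interval [a,b], where a ≤ 0 < b, such that h is positive at every point of [a,b). Assume the right derivative H := (log∘h)'⁺(0) exists in ℝ. Then for every θ ∈ (0,b) one has 1 + H·θ/(N−1) > 0 and h(θ) ≤ h(0)·(1 + H·θ/(N−1))^{N−1}. -/
/-!
The root `g = h^{1/(N-1)}` is concave, and by the chain rule through `log` its right derivative
at `0` is `g(0)·H/(N-1)`. A concave function lies below its right tangent line, so
`g(θ) ≤ g(0)·(1 + Hθ/(N-1))`; since `g(θ) > 0` the bracket is positive, and raising both sides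
to the power `N-1` gives the bound on `h`.
-/

open Set

/-- A `CD(0,N)` density on the set `I ⊆ ℝ`: a nonnegative function whose
`(N-1)`-st root is concave, stated via the defining inequality. -/
def IsCDZeroDensity (N : ℝ) (I : Set ℝ) (h : ℝ → ℝ) : Prop :=
  (∀ x ∈ I, 0 ≤ h x) ∧
    ∀ x₀ ∈ I, ∀ x₁ ∈ I, ∀ t ∈ Set.Icc (0 : ℝ) 1,
      (1 - t) * h x₀ ^ (1 / (N - 1)) + t * h x₁ ^ (1 / (N - 1)) ≤
        h ((1 - t) * x₀ + t * x₁) ^ (1 / (N - 1))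

open Filter Topology

theorem IsCDZeroDensity.concaveOn {N : ℝ} {I : Set ℝ} {h : ℝ → ℝ}
    (hCD : IsCDZeroDensity N I h) (hI : Convex ℝ I) :
    ConcaveOn ℝ I (fun x => h x ^ (1 / (N - 1))) := by
  refine ⟨hI, fun x hx y hy s t hs ht hst => ?_⟩
  obtain rfl : s = 1 - t := by linarith
  exact hCD.2 x hx y hy t ⟨ht, by linarith⟩

theorem ConcaveOn.le_add_mul_of_hasDerivWithinAt_Ioi {S : Set ℝ} {f : ℝ → ℝ} {x y f' : ℝ}
    (hfc : ConcaveOn ℝ S f) (hx : x ∈ S) (hy : y ∈ S) (hxy : x < y)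
    (hf' : HasDerivWithinAt f f' (Ioi x) x) :
    f y ≤ f x + f' * (y - x) := by
  have hslope := hfc.slope_le_of_hasDerivWithinAt_Ioi hx hy hxy hf'
  rw [slope_def_field, div_le_iff₀ (sub_pos.2 hxy)] at hslope
  linarith

theorem HasDerivWithinAt.rpow_const_of_log {f : ℝ → ℝ} {s : Set ℝ}
    {x L p : ℝ} (hf : HasDerivWithinAt (fun y => Real.log (f y)) L s x)
    (hpos : ∀ᶠ y in 𝓝[s] x, 0 < f y) (hx : 0 < f x) :
    HasDerivWithinAt (fun y => f y ^ p) (f x ^ p * (L * p)) s x := by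
  have hexp := (hf.mul_const p).exp
  rw [← Real.rpow_def_of_pos hx] at hexp
  refine hexp.congr_of_eventuallyEq ?_ (Real.rpow_def_of_pos hx p)
  filter_upwards [hpos] with y hy
  exact Real.rpow_def_of_pos hy p

theorem Real.le_mul_rpow_of_rpow_one_div_le {u v K p : ℝ} (hu : 0 ≤ u) (hv : 0 ≤ v)
    (hK : 0 ≤ K) (hp : 0 < p) (h : u ^ (1 / p) ≤ v ^ (1 / p) * K) :
    u ≤ v * K ^ p := by
  have hroot : ∀ w : ℝ, 0 ≤ w → (w ^ (1 / p)) ^ p = w := fun w hw => by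
    rw [← Real.rpow_mul hw, one_div_mul_cancel hp.ne', Real.rpow_one]
  calc u = (u ^ (1 / p)) ^ p := (hroot u hu).symm
    _ ≤ (v ^ (1 / p) * K) ^ p := Real.rpow_le_rpow (by positivity) h hp.le
    _ = v * K ^ p := by rw [Real.mul_rpow (by positivity) hK, hroot v hv]

theorem cd_zero_density_jacobian_comparison_general (N a b H : ℝ) (h : ℝ → ℝ)
    (hN : 1 < N) (ha : a ≤ 0)
    (hCD : IsCDZeroDensity N (Set.Icc a b) h)
    (hpos : ∀ x ∈ Set.Ico a b, 0 < h x)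
    (hH : HasDerivWithinAt (fun y => Real.log (h y)) H (Set.Ioi 0) 0) :
    ∀ θ ∈ Set.Ioo 0 b,
      0 < 1 + H * θ / (N - 1) ∧ h θ ≤ h 0 * (1 + H * θ / (N - 1)) ^ (N - 1) := by
  rintro θ ⟨hθ0, hθb⟩
  have hN1 : 0 < N - 1 := by linarith
  have hh0 : 0 < h 0 := hpos 0 ⟨ha, hθ0.trans hθb⟩
  have hhθ : 0 < h θ := hpos θ ⟨ha.trans hθ0.le, hθb⟩
  have hpos_right : ∀ᶠ y in 𝓝[>] 0, 0 < h y := by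
    filter_upwards [Ioo_mem_nhdsGT (hθ0.trans hθb)] with y hy
    exact hpos y ⟨ha.trans hy.1.le, hy.2⟩
  have hroot_deriv := hH.rpow_const_of_log (p := 1 / (N - 1)) hpos_right hh0
  have htangent := (hCD.concaveOn (convex_Icc a b)).le_add_mul_of_hasDerivWithinAt_Ioi
    ⟨ha, (hθ0.trans hθb).le⟩ ⟨ha.trans hθ0.le, hθb.le⟩ hθ0 hroot_deriv
  have hroot_le : h θ ^ (1 / (N - 1)) ≤ h 0 ^ (1 / (N - 1)) * (1 + H * θ / (N - 1)) := by
    convert htangent using 1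
    ring
  have hK : 0 < 1 + H * θ / (N - 1) :=
    pos_of_mul_pos_right ((Real.rpow_pos_of_pos hhθ _).trans_le hroot_le)
      (Real.rpow_nonneg hh0.le _)
  exact ⟨hK, Real.le_mul_rpow_of_rpow_one_div_le hhθ.le hh0.le hK.le hN1 hroot_le⟩

/-- Jacobian comparison for `CD(0,N)` densities on `[a,b]` with `a ≤ 0 < b`:
if the right logarithmic derivative of `h` at `0` equals `H` (expressed via
`HasDerivWithinAt` on `Set.Ioi 0`), then `h(θ) ≤ h(0)·(1 + Hθ/(N-1))^{N-1}` and
`1 + Hθ/(N-1) > 0` for all `θ ∈ (0,b)`. -/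
theorem cd_zero_density_jacobian_comparison (N a b H : ℝ) (h : ℝ → ℝ)
    (hN : 1 < N) (ha : a ≤ 0) (hb : 0 < b)
    (hCD : IsCDZeroDensity N (Set.Icc a b) h)
    (hpos : ∀ x ∈ Set.Ico a b, 0 < h x)
    (hH : HasDerivWithinAt (fun y => Real.log (h y)) H (Set.Ioi 0) 0) :
    ∀ θ ∈ Set.Ioo 0 b,
      0 < 1 + H * θ / (N - 1) ∧ h θ ≤ h 0 * (1 + H * θ / (N - 1)) ^ (N - 1) :=
  cd_zero_density_jacobian_comparison_general N a b H h hN ha hCD hpos hH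
end

section
/- Let κ < 0 and N > 1 be real, let (a,b) be a nonempty bounded open real interval, and let h be an MCP(κ,N) density on (a,b). Then: (i) either h(x) = 0 for all x ∈ (a,b), or h(x) > 0 for all x ∈ (a,b); (ii) h is locally Lipschitz continuous on (a,b); and (iii) h has finite one-sided limits at a from the right and at b from the left, so h extends to a continuous function on [a,b]. -/
/-!
With `g = h ^ (1 / (N - 1))` and `c = √(-κ / (N - 1))` the `MCP(κ,N)` condition reads
`sinh (c |x₁ - y|) g x₀ ≤ sinh (c |x₁ - x₀|) g y` for `y` between `x₀` and `x₁`.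
Taking `x₁` beyond `y` shows that positivity of `g` at one point spreads to the whole interval.
Taking `x₁` at a fixed distance `D` from `y`, on the side of `z`, gives
`g y ≤ g z + O(|z - y|) g y`; together with the local bound on `g` that the same inequality
provides, this makes `g` locally Lipschitz, and so is `h = g ^ (N - 1)` since `u ↦ u ^ (N - 1)`
is smooth on `(0, ∞)`. For fixed `w`, `g z / sinh (c |z - w|)` is monotone on either side of
`w`, which produces the one-sided limits at `a` and `b`, and with them the continuous extension
of `h` to `[a, b]`.
-/

open Set

open Filter Topology Real Metric

theorem LocallyLipschitzOn.comp {α β γ : Type*} [PseudoEMetricSpace α] [PseudoEMetricSpace β]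
    [PseudoEMetricSpace γ] {f : β → γ} {g : α → β} {s : Set α} {t : Set β}
    (hf : LocallyLipschitzOn t f) (hg : LocallyLipschitzOn s g) (hst : MapsTo g s t) :
    LocallyLipschitzOn s (f ∘ g) := by
  intro x hx
  obtain ⟨Kf, u, hu, hfu⟩ := hf (hst hx)
  obtain ⟨Kg, v, hv, hgv⟩ := hg hx
  exact ⟨Kf * Kg, v ∩ g ⁻¹' u,
    inter_mem hv ((hg.continuousOn x hx).tendsto_nhdsWithin hst hu),
    hfu.comp (hgv.mono inter_subset_left) fun _ hy => hy.2⟩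

theorem LocallyLipschitzOn.congr {α β : Type*} [PseudoEMetricSpace α] [PseudoEMetricSpace β]
    {f g : α → β} {s : Set α} (hf : LocallyLipschitzOn s f) (hfg : EqOn f g s) :
    LocallyLipschitzOn s g := by
  intro x hx
  obtain ⟨K, t, ht, hft⟩ := hf hx
  refine ⟨K, t ∩ s, inter_mem ht self_mem_nhdsWithin, fun y hy z hz => ?_⟩
  rw [← hfg hy.2, ← hfg hz.2]
  exact hft hy.1 hz.1

theorem Real.sinh_sub_sinh_le_cosh_mul {u v : ℝ} (hu : -v ≤ u) (huv : u ≤ v) :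
    sinh v - sinh u ≤ cosh v * (v - u) := by
  refine (convex_Icc (-v) v).image_sub_le_mul_sub_of_deriv_le continuous_sinh.continuousOn
    differentiable_sinh.differentiableOn (fun x hx => ?_) u ⟨hu, huv⟩ v
    ⟨by linarith, le_rfl⟩ huv
  rw [interior_Icc] at hx
  rw [deriv_sinh]
  exact cosh_le_cosh.2 (abs_le_abs hx.2.le (by linarith [hx.1]))

def IsSinhMCPOn (c : ℝ) (I : Set ℝ) (g : ℝ → ℝ) : Prop :=
  ∀ x₀ ∈ I, ∀ x₁ ∈ I, ∀ y ∈ uIcc x₀ x₁,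
    sinh (c * |x₁ - y|) * g x₀ ≤ sinh (c * |x₁ - x₀|) * g y

namespace IsSinhMCPOn

variable {c : ℝ} {I : Set ℝ} {g : ℝ → ℝ}

theorem comp_neg (hg : IsSinhMCPOn c I g) : IsSinhMCPOn c (-I) fun x => g (-x) := by
  intro x₀ h₀ x₁ h₁ y hy
  have := hg (-x₀) h₀ (-x₁) h₁ (-y) (by
    rw [mem_uIcc] at hy ⊢
    rcases hy with hy | hy
    · exact Or.inr ⟨neg_le_neg hy.2, neg_le_neg hy.1⟩
    · exact Or.inl ⟨neg_le_neg hy.2, neg_le_neg hy.1⟩)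
  rwa [neg_sub_neg, neg_sub_neg, abs_sub_comm y, abs_sub_comm x₀] at this

theorem sinh_sub_mul_le (hg : IsSinhMCPOn c I g) {y z D : ℝ} (hD : closedBall y D ⊆ I)
    (hz : dist z y ≤ D) : sinh (c * (D - dist z y)) * g y ≤ sinh (c * D) * g z := by
  rw [Real.closedBall_eq_Icc] at hD
  rw [Real.dist_eq] at hz ⊢
  have hD0 : 0 ≤ D := (abs_nonneg _).trans hz
  have hy : y ∈ I := hD ⟨by linarith, by linarith⟩
  rcases abs_le.1 hz with ⟨hz₁, hz₂⟩
  rcases le_total y z with hyz | hzy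
  · have := hg y hy (y + D) (hD ⟨by linarith, le_rfl⟩) z
      (mem_uIcc.2 (Or.inl ⟨hyz, by linarith⟩))
    have e₁ : |y + D - z| = D - |z - y| := by
      rw [abs_of_nonneg (sub_nonneg.2 hyz), abs_of_nonneg (by linarith)]; ring
    rwa [e₁, add_sub_cancel_left, abs_of_nonneg hD0] at this
  · have := hg y hy (y - D) (hD ⟨le_rfl, by linarith⟩) z
      (mem_uIcc.2 (Or.inr ⟨by linarith, hzy⟩))
    have e₁ : |y - D - z| = D - |z - y| := by
      rw [abs_of_nonpos (sub_nonpos.2 hzy), abs_of_nonpos (by linarith)]; ring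
    rwa [e₁, sub_sub_cancel_left, abs_neg, abs_of_nonneg hD0] at this

theorem le_add_mul_dist (hc : 0 < c) (hg : IsSinhMCPOn c I g) (hg0 : ∀ x ∈ I, 0 ≤ g x)
    {y z D : ℝ} (hD0 : 0 < D) (hD : closedBall y D ⊆ I) (hz : dist z y ≤ D) :
    g y ≤ g z + g y * (c * cosh (c * D) / sinh (c * D)) * dist z y := by
  have hs : 0 < sinh (c * D) := sinh_pos_iff.2 (mul_pos hc hD0)
  have hgy : 0 ≤ g y := hg0 y (hD (mem_closedBall_self hD0.le))
  have hinc : sinh (c * D) - sinh (c * (D - dist z y)) ≤ cosh (c * D) * (c * dist z y) := by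
    have := sinh_sub_sinh_le_cosh_mul (u := c * (D - dist z y)) (v := c * D)
      (by nlinarith [dist_nonneg (x := z) (y := y)]) (by nlinarith [dist_nonneg (x := z) (y := y)])
    rwa [show c * D - c * (D - dist z y) = c * dist z y by ring] at this
  refine le_of_mul_le_mul_left ?_ hs
  rw [mul_add, show sinh (c * D) * (g y * (c * cosh (c * D) / sinh (c * D)) * dist z y)
    = cosh (c * D) * (c * dist z y) * g y by field_simp]
  nlinarith [hg.sinh_sub_mul_le hD hz, mul_le_mul_of_nonneg_right hinc hgy]

theorem locallyLipschitzOn (hc : 0 < c) (hg : IsSinhMCPOn c I g) (hg0 : ∀ x ∈ I, 0 ≤ g x)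
    (hI : IsOpen I) : LocallyLipschitzOn I g := by
  intro x hx
  obtain ⟨δ, hδ, hball⟩ := Metric.isOpen_iff.1 hI x hx
  set ε := δ / 4 with hεδ
  have hε : 0 < ε := by positivity
  have hsub : ∀ y ∈ closedBall x ε, closedBall y (2 * ε) ⊆ I := fun y hy =>
    (closedBall_subset_ball' (by rw [mem_closedBall] at hy; linarith)).trans hball
  obtain ⟨M, hM⟩ : ∃ M, ∀ y ∈ closedBall x ε, g y ≤ M := by
    refine ⟨sinh (c * (2 * ε)) / sinh (c * ε) * g x, fun y hy => ?_⟩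
    have hxy : dist x y ≤ ε := by rw [dist_comm]; exact hy
    have hmono : sinh (c * ε) ≤ sinh (c * (2 * ε - dist x y)) :=
      sinh_le_sinh.2 (mul_le_mul_of_nonneg_left (by linarith) hc.le)
    rw [div_mul_eq_mul_div, le_div_iff₀ (by positivity)]
    nlinarith [hg.sinh_sub_mul_le (hsub y hy) (by linarith : dist x y ≤ 2 * ε),
      mul_le_mul_of_nonneg_right hmono (hg0 y (hsub y hy (mem_closedBall_self (by linarith))))]
  set L := c * cosh (c * (2 * ε)) / sinh (c * (2 * ε))
  refine ⟨_, closedBall x ε, mem_nhdsWithin_of_mem_nhds (closedBall_mem_nhds x hε),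
    LipschitzOnWith.of_le_add_mul' (M * L) fun y hy z hz => ?_⟩
  have hyz : dist z y ≤ 2 * ε := by
    linarith [dist_triangle z x y, mem_closedBall.1 hz, mem_closedBall'.1 hy]
  calc g y ≤ g z + g y * L * dist z y :=
        hg.le_add_mul_dist hc hg0 (by positivity) (hsub y hy) hyz
    _ ≤ g z + M * L * dist y z := by
        rw [dist_comm]; gcongr; exact hM y hy

theorem eq_zero_or_pos {a b : ℝ} (hc : 0 < c) (hg : IsSinhMCPOn c (Ioo a b) g)
    (hg0 : ∀ x ∈ Ioo a b, 0 ≤ g x) :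
    (∀ x ∈ Ioo a b, g x = 0) ∨ ∀ x ∈ Ioo a b, 0 < g x := by
  refine or_iff_not_imp_left.2 fun hne y hy => ?_
  obtain ⟨x₀, hx₀, hgx₀⟩ := not_forall₂.1 hne
  obtain ⟨x₁, hx₁, hyx₁, hmem⟩ : ∃ x₁ ∈ Ioo a b, y ≠ x₁ ∧ y ∈ uIcc x₀ x₁ := by
    rcases le_total x₀ y with h | h
    · exact ⟨(y + b) / 2, ⟨by linarith [hy.1, hy.2], by linarith [hy.2]⟩,
        by linarith [hy.2], mem_uIcc.2 (Or.inl ⟨h, by linarith [hy.2]⟩)⟩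
    · exact ⟨(a + y) / 2, ⟨by linarith [hy.1], by linarith [hy.1, hy.2]⟩,
        by linarith [hy.1], mem_uIcc.2 (Or.inr ⟨by linarith [hy.1], h⟩)⟩
  have hs : 0 < sinh (c * |x₁ - y|) :=
    sinh_pos_iff.2 (mul_pos hc (abs_pos.2 (sub_ne_zero.2 hyx₁.symm)))
  exact pos_of_mul_pos_right ((mul_pos hs ((hg0 x₀ hx₀).lt_of_ne' hgx₀)).trans_le
    (hg x₀ hx₀ x₁ hx₁ y hmem)) (sinh_nonneg_iff.2 (by positivity))

theorem exists_tendsto_nhdsLT {a b : ℝ} (hc : 0 < c) (hab : a < b)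
    (hg : IsSinhMCPOn c (Ioo a b) g) (hg0 : ∀ x ∈ Ioo a b, 0 ≤ g x) :
    ∃ L, Tendsto g (𝓝[<] b) (𝓝 L) := by
  obtain ⟨w, hw⟩ := nonempty_Ioo.2 hab
  have hs : ∀ z ∈ Ioo w b, 0 < sinh (c * (z - w)) := fun z hz =>
    sinh_pos_iff.2 (mul_pos hc (sub_pos.2 hz.1))
  have hanti : AntitoneOn (fun z => g z / sinh (c * (z - w))) (Ioo w b) := by
    intro y hy z hz hyz
    have := hg z ⟨hw.1.trans hz.1, hz.2⟩ w hw y (mem_uIcc.2 (Or.inr ⟨hy.1.le, hyz⟩))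
    rw [abs_sub_comm, abs_of_pos (sub_pos.2 hy.1), abs_sub_comm,
      abs_of_pos (sub_pos.2 hz.1)] at this
    rw [div_le_div_iff₀ (hs z hz) (hs y hy)]
    linarith
  have hbdd : BddBelow ((fun z => g z / sinh (c * (z - w))) '' Ioo w b) :=
    ⟨0, by
      rintro _ ⟨z, hz, rfl⟩
      exact div_nonneg (hg0 z ⟨hw.1.trans hz.1, hz.2⟩) (hs z hz).le⟩
  have hsinh : Tendsto (fun z => sinh (c * (z - w))) (𝓝[<] b) (𝓝 (sinh (c * (b - w)))) :=
    ((continuous_sinh.comp (by fun_prop)).tendsto b).mono_left nhdsWithin_le_nhds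
  have hquot := hanti.tendsto_nhdsWithin_Ioo_left (nonempty_Ioo.2 hw.2) hbdd
  refine ⟨_, (hquot.mul hsinh).congr' ?_⟩
  filter_upwards [Ioo_mem_nhdsLT hw.2] with z hz using div_mul_cancel₀ _ (hs z hz).ne'

theorem exists_tendsto_nhdsGT {a b : ℝ} (hc : 0 < c) (hab : a < b)
    (hg : IsSinhMCPOn c (Ioo a b) g) (hg0 : ∀ x ∈ Ioo a b, 0 ≤ g x) :
    ∃ L, Tendsto g (𝓝[>] a) (𝓝 L) := by
  have hg' : IsSinhMCPOn c (Ioo (-b) (-a)) fun x => g (-x) := neg_Ioo a b ▸ hg.comp_neg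
  obtain ⟨L, hL⟩ := hg'.exists_tendsto_nhdsLT hc (neg_lt_neg hab)
    fun x hx => hg0 _ ⟨by linarith [hx.2], by linarith [hx.1]⟩
  exact ⟨L, by simpa [Function.comp_def] using hL.comp tendsto_neg_nhdsGT⟩

end IsSinhMCPOn

theorem sqrt_neg_div_sub_one_pos {κ N : ℝ} (hκ : κ < 0) (hN : 1 < N) :
    0 < √(-κ / (N - 1)) :=
  Real.sqrt_pos.2 (div_pos (neg_pos.2 hκ) (sub_pos.2 hN))

namespace IsMCPNegDensity

variable {κ N a b : ℝ} {I : Set ℝ} {h : ℝ → ℝ}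

theorem isSinhMCPOn (hκ : κ < 0) (hN : 1 < N) (hMCP : IsMCPNegDensity κ N I h) :
    IsSinhMCPOn √(-κ / (N - 1)) I fun x => h x ^ (1 / (N - 1)) := by
  intro x₀ h₀ x₁ h₁ y hy
  rcases eq_or_ne x₀ x₁ with rfl | hne
  · rw [uIcc_self, mem_singleton_iff] at hy
    rw [hy]
  obtain ⟨t, ht, rfl⟩ : ∃ t ∈ Icc (0 : ℝ) 1, (1 - t) * x₀ + t * x₁ = y := by
    rw [← segment_eq_uIcc, segment_eq_image] at hy
    simpa [smul_eq_mul] using hy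
  have hdist : |x₁ - ((1 - t) * x₀ + t * x₁)| = (1 - t) * |x₁ - x₀| := by
    rw [show x₁ - ((1 - t) * x₀ + t * x₁) = (1 - t) * (x₁ - x₀) by ring, abs_mul,
      abs_of_nonneg (sub_nonneg.2 ht.2)]
  have hpos : 0 < sinh (√(-κ / (N - 1)) * |x₁ - x₀|) :=
    sinh_pos_iff.2 (mul_pos (sqrt_neg_div_sub_one_pos hκ hN) (abs_pos.2 (sub_ne_zero.2 hne.symm)))
  have := hMCP.2 x₀ h₀ x₁ h₁ hne t ht
  rw [div_mul_eq_mul_div, div_le_iff₀ hpos] at this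
  rw [hdist]
  linarith

theorem rpow_inv_eqOn (hN : 1 < N) (hMCP : IsMCPNegDensity κ N I h) :
    EqOn (fun x => (h x ^ (1 / (N - 1))) ^ (N - 1)) h I := fun x hx => by
  dsimp only
  rw [← rpow_mul (hMCP.1 x hx), one_div_mul_cancel (sub_pos.2 hN).ne', rpow_one]

theorem tendsto_of_tendsto_rpow (hN : 1 < N) (hMCP : IsMCPNegDensity κ N I h) {l : Filter ℝ}
    {L : ℝ} (hl : I ∈ l) (hL : Tendsto (fun x => h x ^ (1 / (N - 1))) l (𝓝 L)) :
    Tendsto h l (𝓝 (L ^ (N - 1))) :=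
  ((continuousAt_rpow_const L (N - 1) (Or.inr (sub_pos.2 hN).le)).tendsto.comp hL).congr'
    (eventually_of_mem hl (hMCP.rpow_inv_eqOn hN))

theorem eq_zero_or_pos (hκ : κ < 0) (hN : 1 < N) (hMCP : IsMCPNegDensity κ N (Ioo a b) h) :
    (∀ x ∈ Ioo a b, h x = 0) ∨ ∀ x ∈ Ioo a b, 0 < h x := by
  have hp : 1 / (N - 1) ≠ 0 := one_div_ne_zero (sub_pos.2 hN).ne'
  refine ((hMCP.isSinhMCPOn hκ hN).eq_zero_or_pos (sqrt_neg_div_sub_one_pos hκ hN)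
    fun x hx => rpow_nonneg (hMCP.1 x hx) _).imp (fun h0 x hx => ?_) (fun hpos x hx => ?_)
  · exact (rpow_eq_zero (hMCP.1 x hx) hp).1 (h0 x hx)
  · refine (hMCP.1 x hx).lt_of_ne' fun hx0 => (hpos x hx).ne' ?_
    rw [hx0, zero_rpow hp]

theorem locallyLipschitzOn (hκ : κ < 0) (hN : 1 < N) (hMCP : IsMCPNegDensity κ N (Ioo a b) h) :
    LocallyLipschitzOn (Ioo a b) h := by
  rcases hMCP.eq_zero_or_pos hκ hN with h0 | hpos
  · exact (LocallyLipschitz.const 0).locallyLipschitzOn.congr fun x hx => (h0 x hx).symm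
  have hpow : LocallyLipschitzOn (Ioi 0) fun u : ℝ => u ^ (N - 1) :=
    ContDiffOn.locallyLipschitzOn (convex_Ioi 0) fun u hu =>
      (contDiffAt_rpow_const_of_ne hu.ne').contDiffWithinAt
  have hg := (hMCP.isSinhMCPOn hκ hN).locallyLipschitzOn (sqrt_neg_div_sub_one_pos hκ hN)
    (fun x hx => rpow_nonneg (hMCP.1 x hx) _) isOpen_Ioo
  exact (hpow.comp hg fun x hx => rpow_pos_of_pos (hpos x hx) _).congr (hMCP.rpow_inv_eqOn hN)

end IsMCPNegDensity

/-- Regularity of `MCP(κ,N)` densities (`κ < 0`) on a bounded open interval `(a,b)`: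
either `h` vanishes identically or is everywhere positive; `h` is locally Lipschitz on
`(a,b)`; and `h` has finite one-sided limits at the endpoints, hence extends to a
continuous function on `[a,b]`. -/
theorem mcp_neg_density_regularity (κ N a b : ℝ) (h : ℝ → ℝ)
    (hκ : κ < 0) (hN : 1 < N) (hab : a < b)
    (hMCP : IsMCPNegDensity κ N (Set.Ioo a b) h) :
    ((∀ x ∈ Set.Ioo a b, h x = 0) ∨ (∀ x ∈ Set.Ioo a b, 0 < h x)) ∧
    (∀ x ∈ Set.Ioo a b, ∃ K : NNReal, ∃ ε : ℝ, 0 < ε ∧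
      LipschitzOnWith K h (Set.Ioo a b ∩ Metric.ball x ε)) ∧
    (∃ La Lb : ℝ,
      Filter.Tendsto h (nhdsWithin a (Set.Ioi a)) (nhds La) ∧
      Filter.Tendsto h (nhdsWithin b (Set.Iio b)) (nhds Lb)) ∧
    (∃ H : ℝ → ℝ, ContinuousOn H (Set.Icc a b) ∧ Set.EqOn H h (Set.Ioo a b)) := by
  have hg := hMCP.isSinhMCPOn hκ hN
  have hg0 : ∀ x ∈ Ioo a b, 0 ≤ h x ^ (1 / (N - 1)) := fun x hx => rpow_nonneg (hMCP.1 x hx) _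
  obtain ⟨La, ha⟩ := hg.exists_tendsto_nhdsGT (sqrt_neg_div_sub_one_pos hκ hN) hab hg0
  obtain ⟨Lb, hb⟩ := hg.exists_tendsto_nhdsLT (sqrt_neg_div_sub_one_pos hκ hN) hab hg0
  replace ha := hMCP.tendsto_of_tendsto_rpow hN (Ioo_mem_nhdsGT hab) ha
  replace hb := hMCP.tendsto_of_tendsto_rpow hN (Ioo_mem_nhdsLT hab) hb
  have hlip := hMCP.locallyLipschitzOn hκ hN
  refine ⟨hMCP.eq_zero_or_pos hκ hN, fun x hx => ?_, ⟨_, _, ha, hb⟩, extendFrom (Ioo a b) h,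
    continuousOn_Icc_extendFrom_Ioo hlip.continuousOn ha hb, extendFrom_extends hlip.continuousOn⟩
  obtain ⟨K, t, ht, hK⟩ := hlip hx
  obtain ⟨ε, hε, hsub⟩ := Metric.mem_nhdsWithin_iff.1 ht
  exact ⟨K, ε, hε, hK.mono (inter_comm (Ioo a b) _ ▸ hsub)⟩
end
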